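/- arXiv:1912.01338 — 9 statements merged into one kernel-verified Lean document; each statement's English description precedes it below -/
import Mathlib

section
/- Let $C_m$ be the $m\times m$ matrix with entries $C_m[i,j] = x_{\max(i, m+1-j)}$ for variables $x_1,\dots,x_m$. Then $\det(C_m) = (-1)^{\lfloor m/2 \rfloor}\prod_{i=1}^{m}(x_i - x_{i+1})$, where $x_{m+1}=0$. -/
theorem hook_det_C {R : Type*} [CommRing R] (m : ℕ) (x : ℕ → R) (hx : x (m + 1) = 0) :
    Matrix.det (Matrix.of fun i j : Fin m => x (max (i.1 + 1) (m + 1 - (j.1 + 1)))) =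
      (-1 : R) ^ (m / 2) * ∏ i ∈ Finset.range m, (x (i + 1) - x (i + 2)) := by
  induction m generalizing x with
  | zero => simp
  | succ n ih =>
    obtain _ | k := n
    · simp [hx]
    · set A : Matrix (Fin (k + 2)) (Fin (k + 2)) R :=
        Matrix.of fun i j : Fin (k + 2) => x (max (i.1 + 1) (k + 2 + 1 - (j.1 + 1))) with hA
      have h01 : (0 : Fin (k + 2)) ≠ 1 := by
        simp [Fin.ext_iff]
      have hrow : A 0 + (-1 : R) • A 1 =
          fun j : Fin (k + 2) => if j = Fin.last (k + 1) then x 1 - x 2 else 0 := by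
        funext j
        simp only [Pi.add_apply, Pi.smul_apply, smul_eq_mul, neg_one_mul, hA, Matrix.of_apply]
        by_cases hj : j = Fin.last (k + 1)
        · subst hj
          simp only [if_pos rfl, Fin.last, Fin.val_zero, Fin.val_one]
          norm_num
          ring
        · have hj' : j.1 < k + 1 := lt_of_le_of_ne (Nat.lt_succ_iff.mp j.2)
            (fun h => hj (Fin.ext h))
          have h1 : max (0 + 1) (k + 2 + 1 - (j.1 + 1)) = k + 2 - j.1 := by omega
          have h2 : max (1 + 1) (k + 2 + 1 - (j.1 + 1)) = k + 2 - j.1 := by omega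
          rw [if_neg hj, Fin.val_zero, Fin.val_one, h1, h2]
          ring
      have key : A.det = Matrix.det (A.updateRow 0 (A 0 + (-1 : R) • A 1)) :=
        (Matrix.det_updateRow_add_smul_self A h01 (-1)).symm
      rw [key, hrow, Matrix.det_succ_row_zero]
      rw [Finset.sum_eq_single (Fin.last (k + 1))]
      · -- main term
        have hminor : (Matrix.updateRow A 0
              (fun j : Fin (k + 2) => if j = Fin.last (k + 1) then x 1 - x 2 else 0)).submatrix
              Fin.succ (Fin.last (k + 1)).succAbove =
            Matrix.of fun i j : Fin (k + 1) =>
              (fun t => x (t + 1)) (max (i.1 + 1) (k + 1 + 1 - (j.1 + 1))) := by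
          funext i j
          simp only [Matrix.submatrix_apply, Fin.succAbove_last,
            Matrix.updateRow_ne (Fin.succ_ne_zero i), hA, Matrix.of_apply, Fin.val_succ,
            Fin.coe_castSucc]
          congr 1
          omega
        rw [hminor, ih (fun t => x (t + 1)) (by simpa using hx)]
        simp only [Matrix.updateRow_self, Fin.val_last, eq_self_iff_true, if_true]
        have hsign : (-1 : R) ^ (k + 1) * (-1 : R) ^ ((k + 1) / 2) =
            (-1 : R) ^ ((k + 2) / 2) := by
          rw [← pow_add, neg_one_pow_eq_pow_mod_two, neg_one_pow_eq_pow_mod_two ((k + 2) / 2)]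
          have h : (k + 1 + (k + 1) / 2) % 2 = (k + 2) / 2 % 2 := by
            obtain ⟨t, rfl⟩ | ⟨t, rfl⟩ := Nat.even_or_odd k <;> omega
          rw [h]
        have hprod : ∏ i ∈ Finset.range (k + 2), (x (i + 1) - x (i + 2)) =
            (∏ i ∈ Finset.range (k + 1), (x (i + 2) - x (i + 3))) * (x 1 - x 2) := by
          rw [Finset.prod_range_succ']
        rw [hprod, ← hsign]
        ring
      · intro j _ hj
        rw [Matrix.updateRow_self]
        simp [if_neg hj]
      · intro h
        exact absurd (Finset.mem_univ _) h
end

section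
/- Let $D_m$ be the $m\times m$ matrix with entries $D_m[i,j] = x_{\max(m+1-i, j)}$ for variables $x_1,\dots,x_m$. Then $\det(D_m) = (-1)^{\lfloor m/2 \rfloor}\prod_{i=1}^{m}(x_i - x_{i+1})$, where $x_{m+1}=0$. -/
open Finset

private lemma negpow_congr {R : Type*} [CommRing R] {a b : ℕ} (h : a % 2 = b % 2) :
    (-1 : R) ^ a = (-1 : R) ^ b := by
  rw [← Nat.div_add_mod a 2, ← Nat.div_add_mod b 2, h, pow_add, pow_add, pow_mul, pow_mul]
  norm_num

private lemma tele' {R : Type*} [CommRing R] (x : ℕ → R) (a m : ℕ) (h : a ≤ m) :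
    ∑ k ∈ Finset.Ico a m, (x (k+1) - x (k+2)) = x (a+1) - x (m+1) := by
  induction m, h using Nat.le_induction with
  | base => simp
  | succ n hn ih => rw [Finset.sum_Ico_succ_top hn, ih]; ring_nf

private lemma detB' {R : Type*} [CommRing R] (x : ℕ → R) (m : ℕ) :
    Matrix.det (Matrix.of fun i j : Fin m =>
        if m ≤ i.1 + j.1 + 1 then x (j.1+1) - x (j.1+2) else 0) =
      (-1 : R) ^ (m / 2) * ∏ i ∈ Finset.range m, (x (i + 1) - x (i + 2)) := by
  induction m with
  | zero => simp
  | succ n ih =>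
    rw [Matrix.det_succ_row_zero]
    rw [Finset.sum_eq_single (Fin.last n)]
    · have h1 : (Matrix.of fun i j : Fin (n+1) =>
          if n+1 ≤ i.1 + j.1 + 1 then x (j.1+1) - x (j.1+2) else 0).submatrix
            Fin.succ (Fin.last n).succAbove
          = Matrix.of fun i j : Fin n =>
            if n ≤ i.1 + j.1 + 1 then x (j.1+1) - x (j.1+2) else 0 := by
        rw [Fin.succAbove_last]
        ext i j
        simp only [Matrix.submatrix_apply, Matrix.of_apply, Fin.val_succ, Fin.coe_castSucc]
        refine if_congr (by omega) rfl rfl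
      rw [h1, ih]
      simp only [Matrix.of_apply, Fin.val_last, Fin.val_zero]
      erw [if_pos (show n + 1 ≤ 0 + n + 1 by omega)]
      rw [Finset.prod_range_succ]
      have hp : (-1 : R) ^ ((n+1) / 2) = (-1 : R) ^ (n : ℕ) * (-1) ^ (n / 2) := by
        rcases Nat.even_or_odd n with ⟨t, ht⟩ | ⟨t, ht⟩ <;> subst ht
        · rw [show (t+t+1)/2 = t by omega, show (t+t)/2 = t by omega,
            show t+t = 2*t by ring, pow_mul]
          norm_num
        · rw [show (2*t+1+1)/2 = t+1 by omega, show (2*t+1)/2 = t by omega, pow_succ, pow_add,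
            pow_mul]
          norm_num
      rw [hp]; ring
    · intro j _ hj
      have hjn : j.1 < n := Fin.val_lt_last hj
      simp only [Matrix.of_apply, Fin.val_zero]
      erw [if_neg (show ¬ (n + 1 ≤ 0 + j.1 + 1) by omega)]
      ring
    · simp

theorem hook_det_D {R : Type*} [CommRing R] (m : ℕ) (x : ℕ → R) (hx : x (m + 1) = 0) :
    Matrix.det (Matrix.of fun i j : Fin m => x (max (m + 1 - (i.1 + 1)) (j.1 + 1))) =
      (-1 : R) ^ (m / 2) * ∏ i ∈ Finset.range m, (x (i + 1) - x (i + 2)) := by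
  classical
  have hD : (Matrix.of fun i j : Fin m => x (max (m + 1 - (i.1 + 1)) (j.1 + 1)))
      = (Matrix.of fun i j : Fin m =>
          if m ≤ i.1 + j.1 + 1 then x (j.1+1) - x (j.1+2) else 0) *
        (Matrix.of fun k j : Fin m => if j.1 ≤ k.1 then (1 : R) else 0) := by
    ext i j
    rw [Matrix.mul_apply]
    have hstep : ∀ k : Fin m,
        (Matrix.of fun i j : Fin m =>
          if m ≤ i.1 + j.1 + 1 then x (j.1+1) - x (j.1+2) else 0) i k *
        (Matrix.of fun k j : Fin m => if j.1 ≤ k.1 then (1 : R) else 0) k j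
        = (fun t : ℕ => if max (m-1-i.1) j.1 ≤ t then x (t+1) - x (t+2) else 0) k.1 := by
      intro k
      simp only [Matrix.of_apply]
      by_cases h2 : j.1 ≤ k.1
      · rw [if_pos h2, mul_one]
        by_cases h1 : m ≤ i.1 + k.1 + 1
        · rw [if_pos h1, if_pos (by omega)]
        · rw [if_neg h1, if_neg (by omega)]
      · rw [if_neg h2, mul_zero, if_neg (by omega)]
    have hs : ∑ k : Fin m, (fun t : ℕ => if max (m-1-i.1) j.1 ≤ t then x (t+1) - x (t+2) else 0) k.1
        = ∑ k ∈ Finset.range m,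
            (fun t : ℕ => if max (m-1-i.1) j.1 ≤ t then x (t+1) - x (t+2) else 0) k :=
      Fin.sum_univ_eq_sum_range (fun t : ℕ => if max (m-1-i.1) j.1 ≤ t then x (t+1) - x (t+2) else 0) m
    rw [Finset.sum_congr rfl fun k _ => hstep k, hs]
    rw [← Finset.sum_filter]
    have hfil : Finset.filter (fun k => max (m-1-i.1) j.1 ≤ k) (Finset.range m)
        = Finset.Ico (max (m-1-i.1) j.1) m := by
      ext k
      simp only [Finset.mem_filter, Finset.mem_range, Finset.mem_Ico]
      omega
    have him : i.1 < m := i.isLt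
    rw [hfil, tele' x _ m (by omega), hx, sub_zero]
    have hmax : max (m-1-i.1) j.1 + 1 = max (m + 1 - (i.1+1)) (j.1+1) := by omega
    rw [Matrix.of_apply, ← hmax]

  have hdetU : (Matrix.of fun k j : Fin m => if j.1 ≤ k.1 then (1 : R) else 0).det = 1 := by
    rw [Matrix.det_of_lowerTriangular _ (fun i j hij => by
      simp only [Matrix.of_apply]
      exact if_neg (by exact fun h => absurd h (not_le.mpr hij)))]
    simp
  rw [hD, Matrix.det_mul, hdetU, mul_one, detB' x m]
end

section
/- For each pair $(i,j)$ with $1 \le i,j \le N$, let $x^{(i,j)}_1,\dots,x^{(i,j)}_m$ be elements of a commutative ring, and set $x^{(i,j)}_{m+1}=0$. Let $A(N,m)$ be the $Nm \times Nm$ block matrix whose $(i,j)$ block is the $m\times m$ hook matrix with $(r,s)$ entry $x^{(i,j)}_{m+1-\min(r,s)}$. For $1 \le k \le m$, let $X_{(k,k+1)}$ be the $N\times N$ matrix with $(i,j)$ entry $x^{(i,j)}_k - x^{(i,j)}_{k+1}$. Then $\det(A(N,m)) = \prod_{k=1}^{m}\det(X_{(k,k+1)})$. -/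
open Matrix Kronecker Finset

lemma hook_sum {R : Type*} [CommRing R] (m : ℕ) (x : ℕ → R) (hx : x (m+1) = 0)
    (k : ℕ) (hk : k < m) :
    ∑ t ∈ Finset.range m, (if t ≤ k then x (m - t) - x (m - t + 1) else 0) = x (m - k) := by
  have h1 : Finset.filter (fun t => t ≤ k) (Finset.range m) = Finset.range (k+1) := by
    ext t; simp; omega
  rw [Finset.sum_ite, Finset.sum_const_zero, add_zero, h1]
  have h2 : ∀ t ∈ Finset.range (k+1),
      x (m - t) - x (m - t + 1) = x (m + 1 - (t+1)) - x (m + 1 - t) := by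
    intro t ht
    simp only [Finset.mem_range] at ht
    congr 2 <;> omega
  rw [Finset.sum_congr rfl h2, Finset.sum_range_sub (fun t => x (m + 1 - t))]
  simp [hx]

theorem block_hook_det_A {R : Type*} [CommRing R] (N m : ℕ) (x : ℕ → ℕ → ℕ → R)
    (hx : ∀ i j, x i j (m + 1) = 0) :
    Matrix.det (Matrix.of fun p q : Fin N × Fin m =>
      x (p.1.1 + 1) (q.1.1 + 1) (m + 1 - min (p.2.1 + 1) (q.2.1 + 1))) =
    ∏ k ∈ Finset.range m, Matrix.det (Matrix.of fun i j : Fin N =>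
      x (i.1 + 1) (j.1 + 1) (k + 1) - x (i.1 + 1) (j.1 + 1) (k + 2)) := by
  classical
  set L : Matrix (Fin m) (Fin m) R := Matrix.of fun r t => if t ≤ r then 1 else 0 with hL
  set E : Matrix (Fin N × Fin m) (Fin N × Fin m) R :=
    (1 : Matrix (Fin N) (Fin N) R) ⊗ₖ L with hE
  set f : Fin m → Matrix (Fin N) (Fin N) R := fun t =>
    Matrix.of fun i j : Fin N => x (i.1+1) (j.1+1) (m - t.1) - x (i.1+1) (j.1+1) (m - t.1 + 1)
    with hf
  set D := Matrix.blockDiagonal f with hD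
  have hA : (Matrix.of fun p q : Fin N × Fin m =>
      x (p.1.1 + 1) (q.1.1 + 1) (m + 1 - min (p.2.1 + 1) (q.2.1 + 1))) = E * D * Eᵀ := by
    ext ⟨i, r⟩ ⟨j, s⟩
    simp only [Matrix.mul_apply, Fintype.sum_prod_type, Matrix.transpose_apply, hE, hD, hL, hf,
      Matrix.kroneckerMap_apply, Matrix.blockDiagonal_apply, Matrix.of_apply, Matrix.one_apply]
    simp only [ite_mul, mul_ite, one_mul, mul_one, zero_mul, mul_zero,
      Finset.sum_ite_eq, Finset.sum_ite_eq', Finset.mem_univ, if_true]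
    simp only [← ite_and]
    simp only [and_comm]
    simp only [ite_and]
    simp only [Finset.sum_ite_eq, Finset.mem_univ, if_true]
    rw [Finset.sum_comm]
    simp only [Finset.sum_ite_eq, Finset.mem_univ, if_true]
    have hsum := hook_sum m (x (i.1+1) (j.1+1)) (hx _ _) (min r.1 s.1)
      (by omega)
    rw [← Fin.sum_univ_eq_sum_range (fun t => if t ≤ min r.1 s.1
      then x (i.1+1) (j.1+1) (m - t) - x (i.1+1) (j.1+1) (m - t + 1) else 0) m] at hsum
    rw [show m + 1 - (r.1+1) ⊓ (s.1+1) = m - min r.1 s.1 from by omega, ← hsum]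
    apply Finset.sum_congr rfl
    intro t _
    simp only [Fin.le_def]
    split_ifs <;> first | rfl | (exfalso; omega)
  rw [hA, Matrix.det_mul, Matrix.det_mul, Matrix.det_transpose]
  have hLdet : L.det = 1 := by
    have htri : L.BlockTriangular OrderDual.toDual := by
      intro a b hab
      have h1 : a < b := hab
      simp only [hL, Matrix.of_apply]
      rw [if_neg (not_le.2 h1)]
    rw [Matrix.det_of_lowerTriangular L htri]
    simp [hL]
  have hEdet : E.det = 1 := by
    rw [hE, Matrix.det_kronecker, Matrix.det_one, hLdet]
    simp
  rw [hEdet, one_mul, mul_one, hD, Matrix.det_blockDiagonal]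
  rw [Fin.prod_univ_eq_prod_range (fun k => Matrix.det (Matrix.of fun i j : Fin N =>
      x (i.1+1) (j.1+1) (m - k) - x (i.1+1) (j.1+1) (m - k + 1))) m]
  rw [← Finset.prod_range_reflect (fun k => Matrix.det (Matrix.of fun i j : Fin N =>
      x (i.1 + 1) (j.1 + 1) (k + 1) - x (i.1 + 1) (j.1 + 1) (k + 2))) m]
  apply Finset.prod_congr rfl
  intro k hk
  simp only [Finset.mem_range] at hk
  congr 1
  ext i j
  simp only [Matrix.of_apply]
  congr 2 <;> omega
end

section
/- For each pair $(i,j)$ with $1 \le i,j \le N$, let $x^{(i,j)}_1,\dots,x^{(i,j)}_m$ be elements of a commutative ring, and set $x^{(i,j)}_{m+1}=0$. Let $B(N,m)$ be the $Nm \times Nm$ block matrix whose $(i,j)$ block has $(r,s)$ entry $x^{(i,j)}_{\max(r,s)}$. For $1 \le k \le m$, let $X_{(k,k+1)}$ be the $N\times N$ matrix with $(i,j)$ entry $x^{(i,j)}_k - x^{(i,j)}_{k+1}$. Then $\det(B(N,m)) = \prod_{k=1}^{m}\det(X_{(k,k+1)})$. -/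
theorem block_hook_det_B {R : Type*} [CommRing R] (N m : ℕ) (x : ℕ → ℕ → ℕ → R)
    (hx : ∀ i j, x i j (m + 1) = 0) :
    Matrix.det (Matrix.of fun p q : Fin N × Fin m =>
      x (p.1.1 + 1) (q.1.1 + 1) (max (p.2.1 + 1) (q.2.1 + 1))) =
    ∏ k ∈ Finset.range m, Matrix.det (Matrix.of fun i j : Fin N =>
      x (i.1 + 1) (j.1 + 1) (k + 1) - x (i.1 + 1) (j.1 + 1) (k + 2)) := by
  classical
  set M : Matrix (Fin N × Fin m) (Fin N × Fin m) R :=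
    Matrix.of fun p q => x (p.1.1 + 1) (q.1.1 + 1) (max (p.2.1 + 1) (q.2.1 + 1)) with hM
  set T : Matrix (Fin N × Fin m) (Fin N × Fin m) R :=
    Matrix.of fun p q => (if q = p then (1 : R) else 0)
      - (if q.1 = p.1 ∧ q.2.1 = p.2.1 + 1 then (1 : R) else 0) with hTdef
  set M' : Matrix (Fin N × Fin m) (Fin N × Fin m) R :=
    Matrix.of fun p q => x (p.1.1 + 1) (q.1.1 + 1) (max (p.2.1 + 1) (q.2.1 + 1))
      - x (p.1.1 + 1) (q.1.1 + 1) (max (p.2.1 + 2) (q.2.1 + 1)) with hM'def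
  have hTM : T * M = M' := by
    ext p q
    rw [Matrix.mul_apply]
    simp only [hTdef, hM, Matrix.of_apply, sub_mul, ite_mul, one_mul, zero_mul]
    rw [Finset.sum_sub_distrib]
    have h1 : (∑ r : Fin N × Fin m, if r = p then
        x (r.1.1 + 1) (q.1.1 + 1) (max (r.2.1 + 1) (q.2.1 + 1)) else 0)
        = x (p.1.1 + 1) (q.1.1 + 1) (max (p.2.1 + 1) (q.2.1 + 1)) := by
      rw [Finset.sum_ite_eq']
      simp
    rw [h1]
    simp only [hM'def, Matrix.of_apply]
    congr 1
    by_cases h : p.2.1 + 1 < m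
    · rw [Finset.sum_eq_single ((p.1, ⟨p.2.1 + 1, h⟩) : Fin N × Fin m)]
      · simp; congr 1; omega
      · intro r _ hr
        rw [if_neg]
        rintro ⟨h1, h2⟩
        exact hr (Prod.ext h1 (Fin.ext h2))
      · intro hmem; exact absurd (Finset.mem_univ _) hmem
    · have hp : p.2.1 + 1 = m := by omega
      have hmax : max (p.2.1 + 2) (q.2.1 + 1) = m + 1 := by
        have := q.2.2
        omega
      rw [hmax, hx, Finset.sum_eq_zero]
      intro r _
      rw [if_neg]
      rintro ⟨-, h2⟩
      have := r.2.2
      omega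
  have hT : T.BlockTriangular (fun p => p.2) := by
    intro p q hlt
    have h1 : q ≠ p := by
      rintro rfl; exact lt_irrefl _ hlt
    have h2 : ¬(q.1 = p.1 ∧ q.2.1 = p.2.1 + 1) := by
      rintro ⟨-, h2⟩
      have : (q.2 : ℕ) < p.2.1 := hlt
      omega
    simp [hTdef, h1, h2]
  have hdetT : T.det = 1 := by
    rw [hT.det_fintype]
    apply Finset.prod_eq_one
    intro k _
    have hblock : T.toSquareBlock (fun p => p.2) k = 1 := by
      ext a b
      obtain ⟨p, hp⟩ := a
      obtain ⟨q, hq⟩ := b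
      have h2 : ¬(q.1 = p.1 ∧ q.2.1 = p.2.1 + 1) := by
        rintro ⟨-, h2⟩
        rw [hp] at h2; rw [hq] at h2
        omega
      simp only [Matrix.toSquareBlock, Matrix.toSquareBlockProp, Matrix.toBlock,
        Matrix.of_apply, Matrix.submatrix_apply, hTdef, Matrix.one_apply, h2, if_false,
        sub_zero]
      by_cases hpq : q = p
      · subst hpq; simp
      · rw [if_neg hpq, if_neg]
        simp only [ne_eq, Subtype.mk.injEq]
        exact fun h => hpq (h ▸ rfl)
    rw [hblock, Matrix.det_one]
  have hM'tri : M'.BlockTriangular (fun p => OrderDual.toDual p.2) := by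
    intro p q hlt
    have hlt' : (p.2 : ℕ) < q.2.1 := hlt
    have e1 : max (p.2.1 + 1) (q.2.1 + 1) = q.2.1 + 1 := by omega
    have e2 : max (p.2.1 + 2) (q.2.1 + 1) = q.2.1 + 1 := by omega
    simp [hM'def, e1, e2, max_eq_right hlt'.le]
  have key : M.det = M'.det := by
    rw [← hTM, Matrix.det_mul, hdetT, one_mul]
  rw [key, hM'tri.det_fintype]
  have hprod : ∏ k : (Fin m)ᵒᵈ, (M'.toSquareBlock (fun p => OrderDual.toDual p.2) k).det
      = ∏ k : Fin m, (M'.toSquareBlock (fun p => OrderDual.toDual p.2) (OrderDual.toDual k)).det :=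
    Fintype.prod_equiv OrderDual.ofDual _ _ (fun k => rfl)
  rw [hprod]
  rw [← Fin.prod_univ_eq_prod_range]
  apply Finset.prod_congr rfl
  intro k _
  let e : {a : Fin N × Fin m // (fun p => OrderDual.toDual p.2) a = OrderDual.toDual k} ≃ Fin N :=
    { toFun := fun a => a.1.1
      invFun := fun i => ⟨(i, k), rfl⟩
      left_inv := by
        rintro ⟨⟨i, r⟩, h⟩
        have : r = k := by exact_mod_cast h
        subst this; rfl
      right_inv := fun i => rfl }
  have heq : M'.toSquareBlock (fun p => OrderDual.toDual p.2) (OrderDual.toDual k)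
      = (Matrix.of fun i j : Fin N =>
          x (i.1 + 1) (j.1 + 1) (k.1 + 1) - x (i.1 + 1) (j.1 + 1) (k.1 + 2)).submatrix
        ⇑e ⇑e := by
    ext a b
    obtain ⟨p, hp⟩ := a
    obtain ⟨q, hq⟩ := b
    have hp2 : p.2 = k := by exact_mod_cast hp
    have hq2 : q.2 = k := by exact_mod_cast hq
    simp only [Matrix.toSquareBlock, Matrix.toSquareBlockProp, Matrix.toBlock,
      Matrix.of_apply, Matrix.submatrix_apply, hM'def, hp2, hq2]
    congr 2 <;> omega
  rw [heq]
  exact Matrix.det_submatrix_equiv_self e (Matrix.of fun i j : Fin N =>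
    x (i.1 + 1) (j.1 + 1) (k.1 + 1) - x (i.1 + 1) (j.1 + 1) (k.1 + 2))
end

section
/- For each pair $(i,j)$ with $1 \le i,j \le N$, let $x^{(i,j)}_1,\dots,x^{(i,j)}_m$ be elements of a commutative ring, and set $x^{(i,j)}_{m+1}=0$. Let $C(N,m)$ be the $Nm \times Nm$ block matrix whose $(i,j)$ block has $(r,s)$ entry $x^{(i,j)}_{\max(r,\, m+1-s)}$. For $1 \le k \le m$, let $X_{(k,k+1)}$ be the $N\times N$ matrix with $(i,j)$ entry $x^{(i,j)}_k - x^{(i,j)}_{k+1}$. Then $\det(C(N,m)) = (-1)^{N\lfloor m/2\rfloor}\prod_{k=1}^{m}\det(X_{(k,k+1)})$. -/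
open Equiv Equiv.Perm Matrix Finset

lemma blockhook_sign_revPerm : ∀ n : ℕ,
    Equiv.Perm.sign (Fin.revPerm : Equiv.Perm (Fin n)) = (-1) ^ (n / 2)
  | 0 => by
    rw [Subsingleton.elim (Fin.revPerm : Equiv.Perm (Fin 0)) 1]; simp
  | 1 => by
    rw [Subsingleton.elim (Fin.revPerm : Equiv.Perm (Fin 1)) 1]; simp
  | (n+2) => by
    have key : (Fin.revPerm : Equiv.Perm (Fin (n+2))) =
        Equiv.Perm.decomposeFin.symm (Fin.last (n+1), Fin.revPerm * finRotate (n+1)) := by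
      ext i
      refine Fin.cases ?_ ?_ i
      · simp [Fin.ext_iff, Fin.val_rev]
      · intro x
        rw [Equiv.Perm.decomposeFin_symm_apply_succ]
        simp only [Fin.revPerm_apply, Equiv.Perm.coe_mul, Function.comp_apply]
        rcases eq_or_ne x (Fin.last n) with hx | hx
        · subst hx
          have h1 : finRotate (n+1) (Fin.last n) = 0 := by
            simp [finRotate_succ_apply]
          rw [h1]
          have h2 : (Fin.rev (0 : Fin (n+1))).succ = Fin.last (n+1) := by
            simp [Fin.ext_iff, Fin.val_rev, Fin.val_succ]
          rw [h2, Equiv.swap_apply_right]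
          simp [Fin.ext_iff, Fin.val_rev, Fin.val_succ, Fin.val_last]
        · have hxv : (x : ℕ) < n := by
            have h := x.isLt
            have h' : (x : ℕ) ≠ n := fun h'' => hx (Fin.ext h'')
            omega
          have h1 : ((finRotate (n+1) x : Fin (n+1)) : ℕ) = (x : ℕ) + 1 := by
            rw [coe_finRotate]
            simp [hx]
          have h2 : (((Fin.rev (finRotate (n+1) x)).succ : Fin (n+2)) : ℕ) = n - x := by
            rw [Fin.val_succ, Fin.val_rev, h1]
            omega
          have h3 : Equiv.swap (0 : Fin (n+2)) (Fin.last (n+1))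
              ((Fin.rev (finRotate (n+1) x)).succ) = (Fin.rev (finRotate (n+1) x)).succ := by
            apply Equiv.swap_apply_of_ne_of_ne
            · simp only [Ne, Fin.ext_iff, Fin.val_succ, Fin.val_rev, h1, Fin.val_zero]
              omega
            · simp only [Ne, Fin.ext_iff, Fin.val_succ, Fin.val_rev, h1, Fin.val_last]
              omega
          rw [h3]
          simp only [Fin.ext_iff, Fin.val_rev, Fin.val_succ, h1]
          omega
    rw [key, Equiv.Perm.decomposeFin.symm_sign]
    have hlast : (Fin.last (n+1)) ≠ (0 : Fin (n+2)) := by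
      simp [Fin.ext_iff]
    rw [if_neg hlast, _root_.map_mul, blockhook_sign_revPerm (n+1), sign_finRotate, Nat.add_sub_cancel]
    have hstep : (-1 : ℤˣ) * ((-1) ^ ((n+1)/2) * (-1) ^ n) = (-1) ^ (1 + (n+1)/2 + n) := by
      rw [pow_add, pow_add, pow_one, mul_assoc]
    rw [hstep]
    have hmod : (1 + (n+1)/2 + n) % 2 = ((n+2)/2) % 2 := by
      rcases Nat.even_or_odd n with ⟨k,hk⟩|⟨k,hk⟩ <;> subst hk <;> omega
    rw [Int.units_pow_eq_pow_mod_two, hmod, ← Int.units_pow_eq_pow_mod_two]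

theorem block_hook_det_C {R : Type*} [CommRing R] (N m : ℕ) (x : ℕ → ℕ → ℕ → R)
    (hx : ∀ i j, x i j (m + 1) = 0) :
    Matrix.det (Matrix.of fun p q : Fin N × Fin m =>
      x (p.1.1 + 1) (q.1.1 + 1) (max (p.2.1 + 1) (m + 1 - (q.2.1 + 1)))) =
    (-1 : R) ^ (N * (m / 2)) * ∏ k ∈ Finset.range m, Matrix.det (Matrix.of fun i j : Fin N =>
      x (i.1 + 1) (j.1 + 1) (k + 1) - x (i.1 + 1) (j.1 + 1) (k + 2)) := by
  rcases Nat.eq_zero_or_pos N with hN | hN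
  · subst hN
    simp
  set C : Matrix (Fin N × Fin m) (Fin N × Fin m) R :=
    Matrix.of fun p q : Fin N × Fin m =>
      x (p.1.1 + 1) (q.1.1 + 1) (max (p.2.1 + 1) (m + 1 - (q.2.1 + 1))) with hCdef
  set M : Matrix (Fin N × Fin m) (Fin N × Fin m) R :=
    Matrix.of (fun p q : Fin N × Fin m => if m ≤ p.2.1 + q.2.1 + 1 then
      x (p.1.1 + 1) (q.1.1 + 1) (p.2.1 + 1) - x (p.1.1 + 1) (q.1.1 + 1) (p.2.1 + 2) else 0)
    with hMdef
  set E : Matrix (Fin N × Fin m) (Fin N × Fin m) R :=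
    Matrix.of (fun p q : Fin N × Fin m =>
      if h : p.2.1 + 1 < m then (if q = (p.1, ⟨p.2.1 + 1, h⟩) then 1 else 0) else 0) with hEdef
  -- Step 1: row reduction
  have hLC : (1 - E) * C = M := by
    ext p q
    have hEC : (E * C) p q = if h : p.2.1 + 1 < m then C (p.1, ⟨p.2.1 + 1, h⟩) q else 0 := by
      rw [Matrix.mul_apply]
      split_ifs with h
      · rw [Finset.sum_eq_single (p.1, (⟨p.2.1 + 1, h⟩ : Fin m))]
        · rw [hEdef]; simp [h]
        · intro b _ hb
          rw [hEdef]; simp [h, hb]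
        · intro hmem; exact absurd (Finset.mem_univ _) hmem
      · apply Finset.sum_eq_zero
        intro b _
        rw [hEdef]; simp [h]
    have hsub : ((1 - E) * C) p q = C p q - (E * C) p q := by
      rw [Matrix.sub_mul, Matrix.one_mul, Matrix.sub_apply]
    rw [hsub, hEC]
    rw [hCdef, hMdef]
    simp only [Matrix.of_apply]
    split_ifs with h hc hc
    · -- p.2+1 < m, m ≤ p.2+q.2+1
      have h1 : max (p.2.1 + 1) (m + 1 - (q.2.1 + 1)) = p.2.1 + 1 := by omega
      have h2 : max (p.2.1 + 1 + 1) (m + 1 - (q.2.1 + 1)) = p.2.1 + 2 := by omega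
      rw [h1, h2]
    · -- p.2+1 < m, ¬(m ≤ p.2+q.2+1) : both maxes are m - q.2
      have h1 : max (p.2.1 + 1) (m + 1 - (q.2.1 + 1)) = m + 1 - (q.2.1 + 1) := by omega
      have h2 : max (p.2.1 + 1 + 1) (m + 1 - (q.2.1 + 1)) = m + 1 - (q.2.1 + 1) := by
        have := q.2.isLt
        omega
      rw [h1, h2, sub_self]
    · -- ¬(p.2+1 < m): p.2 = m-1
      have h1 : max (p.2.1 + 1) (m + 1 - (q.2.1 + 1)) = p.2.1 + 1 := by
        have := p.2.isLt; have := q.2.isLt; omega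
      have h2 : p.2.1 + 2 = m + 1 := by have := p.2.isLt; omega
      rw [h1, h2, hx, sub_zero]
    · exfalso; have := p.2.isLt; have := q.2.isLt; omega
  -- Step 2: det (1 - E) = 1
  have hdL : (1 - E).det = 1 := by
    rw [← Matrix.det_submatrix_equiv_self finProdFinEquiv.symm (1 - E)]
    have htri : ((1 - E).submatrix finProdFinEquiv.symm finProdFinEquiv.symm).BlockTriangular
        id := by
      intro a b hab
      simp only [Matrix.submatrix_apply, Matrix.sub_apply, Matrix.one_apply]
      have hne : finProdFinEquiv.symm a ≠ finProdFinEquiv.symm b := by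
        intro h; exact absurd (finProdFinEquiv.symm.injective h) (by
          intro h'; subst h'; exact lt_irrefl _ hab)
      rw [if_neg hne]
      rw [hEdef]
      simp only [Matrix.of_apply]
      split_ifs with h h2
      · exfalso
        set p := finProdFinEquiv.symm a with hp
        set q := finProdFinEquiv.symm b with hq
        have hb : b = finProdFinEquiv q := (Equiv.apply_symm_apply _ _).symm
        have ha : a = finProdFinEquiv p := (Equiv.apply_symm_apply _ _).symm
        have hbv : (b : ℕ) = q.2.1 + m * q.1.1 := by rw [hb]; simp
        have hav : (a : ℕ) = p.2.1 + m * p.1.1 := by rw [ha]; simp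
        have hq2 : q.2.1 = p.2.1 + 1 := by rw [h2]
        have hq1 : q.1 = p.1 := by rw [h2]
        have hlt : (b : ℕ) < (a : ℕ) := hab
        rw [hbv, hav, hq2, hq1] at hlt
        omega
      · ring
      · ring
    rw [Matrix.det_of_upperTriangular htri]
    apply Finset.prod_eq_one
    intro a _
    simp only [Matrix.submatrix_apply, Matrix.sub_apply, Matrix.one_apply_eq]
    rw [hEdef]
    simp only [Matrix.of_apply]
    split_ifs with h h2
    · exfalso
      have := congrArg (fun p : Fin N × Fin m => p.2.1) h2
      simp at this
    · ring
    · ring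
  -- the permutation
  set σ : Equiv.Perm (Fin N × Fin m) :=
    Equiv.prodCongrRight (fun _ : Fin N => (Fin.revPerm : Equiv.Perm (Fin m))) with hσdef
  have hσapp : ∀ p : Fin N × Fin m, σ p = (p.1, Fin.rev p.2) := fun p => rfl
  -- Step 3: block triangularity of permuted M
  have htriM : ((M.submatrix id σ)ᵀ).BlockTriangular Prod.snd := by
    intro p q hlt
    simp only [Matrix.transpose_apply, Matrix.submatrix_apply, id_eq, hσapp]
    rw [hMdef]
    simp only [Matrix.of_apply]
    rw [if_neg]
    have h1 : (Fin.rev p.2 : ℕ) = m - (p.2.1 + 1) := Fin.val_rev _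
    have h2 : q.2.1 < p.2.1 := hlt
    have := p.2.isLt
    omega
  have himg : (Finset.univ : Finset (Fin N × Fin m)).image Prod.snd = Finset.univ := by
    ext a
    simp only [Finset.mem_image, Finset.mem_univ, iff_true]
    exact ⟨(⟨0, hN⟩, a), trivial, rfl⟩
  -- each diagonal block
  have hblock : ∀ a : Fin m, (((M.submatrix id σ)ᵀ).toSquareBlock Prod.snd a).det =
      (Matrix.of fun i j : Fin N =>
        x (i.1 + 1) (j.1 + 1) (a.1 + 1) - x (i.1 + 1) (j.1 + 1) (a.1 + 2)).det := by
    intro a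
    let ea : Fin N ≃ {p : Fin N × Fin m // p.2 = a} :=
      { toFun := fun i => ⟨(i, a), rfl⟩
        invFun := fun p => p.1.1
        left_inv := fun i => rfl
        right_inv := fun p => by
          obtain ⟨⟨i, b⟩, hb⟩ := p
          simp only at hb
          subst hb
          rfl }
    rw [← Matrix.det_submatrix_equiv_self ea, ← Matrix.det_transpose]
    congr 1
    ext i j
    simp only [Matrix.transpose_apply, Matrix.submatrix_apply, Matrix.toSquareBlock_def,
      Matrix.of_apply, Matrix.submatrix_apply, id_eq]
    show M ((i : Fin N), a) (σ ((j : Fin N), a)) = _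
    rw [hσapp, hMdef]
    simp only [Matrix.of_apply]
    rw [if_pos (show m ≤ (a : ℕ) + (Fin.rev a : ℕ) + 1 by
      rw [Fin.val_rev]; have := a.isLt; omega)]
  -- determinant of permuted M
  have hMsub : (M.submatrix id σ).det = ∏ k ∈ Finset.range m,
      (Matrix.of fun i j : Fin N =>
        x (i.1 + 1) (j.1 + 1) (k + 1) - x (i.1 + 1) (j.1 + 1) (k + 2)).det := by
    rw [← Matrix.det_transpose, htriM.det, himg]
    rw [Finset.prod_congr rfl (fun a _ => hblock a)]
    exact (Fin.prod_univ_eq_prod_range (fun k => (Matrix.of fun i j : Fin N =>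
      x (i.1 + 1) (j.1 + 1) (k + 1) - x (i.1 + 1) (j.1 + 1) (k + 2)).det) m)
  -- the sign
  have hsign : ((Equiv.Perm.sign σ : ℤ) : R) = (-1) ^ (N * (m / 2)) := by
    rw [hσdef, Equiv.Perm.sign_prodCongrRight]
    rw [Finset.prod_const, blockhook_sign_revPerm m, Finset.card_univ, Fintype.card_fin,
      ← pow_mul, mul_comm (m / 2) N]
    push_cast
    ring
  have hee : ((Equiv.Perm.sign σ : ℤ) : R) * ((Equiv.Perm.sign σ : ℤ) : R) = 1 := by
    rw [hsign, ← pow_add]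
    exact Even.neg_one_pow ⟨N * (m / 2), rfl⟩
  have h1 := Matrix.det_permute' σ M
  have hdetC : C.det = M.det := by
    have h2 := congrArg Matrix.det hLC
    rw [Matrix.det_mul, hdL, one_mul] at h2
    exact h2
  rw [hdetC]
  have : M.det = ((Equiv.Perm.sign σ : ℤ) : R) * (M.submatrix id σ).det := by
    rw [h1]
    rw [← mul_assoc]
    rw [show ((Equiv.Perm.sign σ : ℤ) : R) * ((Equiv.Perm.sign σ : ℤˣ) : R) = 1 from hee]
    rw [one_mul]
  rw [this, hMsub, hsign]
end

section
/- For each pair $(i,j)$ with $1 \le i,j \le N$, let $x^{(i,j)}_1,\dots,x^{(i,j)}_m$ be elements of a commutative ring with $x^{(i,j)}_{m+1}=0$. Let $E(N,m)$ be the $Nm\times Nm$ block matrix whose $(i,j)$ block has $(r,s)$ entry $x^{(i,j)}_{\max(r,\,m+1-s)}$ when $i$ is even, and $x^{(i,j)}_{m+1-\min(r,s)}$ when $i$ is odd. Then $\det(E(N,m)) = (-1)^{\lfloor N/2\rfloor \cdot \lfloor m/2\rfloor}\prod_{k=1}^{m}\det(X_{(k,k+1)})$, where $X_{(k,k+1)}$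 is the $N\times N$ matrix with $(i,j)$ entry $x^{(i,j)}_k - x^{(i,j)}_{k+1}$. -/
open Matrix Finset

namespace BlockHookAux

variable {R : Type*} [CommRing R]

lemma sum_delta_mul {ι : Type*} [Fintype ι] [DecidableEq ι] (a : ι) (f : ι → R) :
    ∑ b, (if b = a then (1:R) else 0) * f b = f a := by
  simp [ite_mul]

lemma sum_opt_mul {ι : Type*} [Fintype ι] [DecidableEq ι] (o : Option ι) (f : ι → R) :
    ∑ b, (if o = some b then (1:R) else 0) * f b = o.elim 0 f := by
  cases o with
  | none => simp
  | some a => simp [eq_comm (a := some a), ite_mul]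

lemma sum_mul_delta {ι : Type*} [Fintype ι] [DecidableEq ι] (a : ι) (f : ι → R) :
    ∑ b, f b * (if b = a then (1:R) else 0) = f a := by
  simp [mul_ite]

lemma sum_mul_opt {ι : Type*} [Fintype ι] [DecidableEq ι] (o : Option ι) (f : ι → R) :
    ∑ b, f b * (if o = some b then (1:R) else 0) = o.elim 0 f := by
  cases o with
  | none => simp
  | some a => simp [eq_comm (a := some a), mul_ite]

lemma evenEntry (m : ℕ) (y : ℕ → R) (r s : ℕ) (hr : r < m) (hs : s < m) :
    (y (max (r + 1) (m - s)) - y (max (r + 2) (m - s))) -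
      (y (max (r + 1) (m + 1 - s)) - y (max (r + 2) (m + 1 - s))) =
    if r + s + 1 = m then y (m - s) - y (m + 1 - s) else 0 := by
  rcases Nat.lt_trichotomy (r + s + 1) m with h | h | h
  · rw [if_neg (by omega), show max (r + 1) (m - s) = m - s from by omega,
      show max (r + 2) (m - s) = m - s from by omega,
      show max (r + 1) (m + 1 - s) = m + 1 - s from by omega,
      show max (r + 2) (m + 1 - s) = m + 1 - s from by omega]
    ring
  · rw [if_pos h, show max (r + 1) (m - s) = m - s from by omega,
      show max (r + 2) (m - s) = m + 1 - s from by omega,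
      show max (r + 1) (m + 1 - s) = m + 1 - s from by omega,
      show max (r + 2) (m + 1 - s) = m + 1 - s from by omega]
    ring
  · rw [if_neg (by omega), show max (r + 1) (m - s) = r + 1 from by omega,
      show max (r + 2) (m - s) = r + 2 from by omega,
      show max (r + 1) (m + 1 - s) = r + 1 from by omega,
      show max (r + 2) (m + 1 - s) = r + 2 from by omega]
    ring

lemma oddEntry (m : ℕ) (y : ℕ → R) (r s : ℕ) (hr : r < m) (hs : s < m) :
    (y (m + 1 - min (r + 1) (s + 1)) - y (m + 1 - min r (s + 1))) -
      (y (m + 1 - min (r + 1) s) - y (m + 1 - min r s)) =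
    if r = s then y (m - s) - y (m + 1 - s) else 0 := by
  rcases Nat.lt_trichotomy r s with h | h | h
  · rw [if_neg (by omega), show min (r + 1) (s + 1) = r + 1 from by omega,
      show min r (s + 1) = r from by omega, show min (r + 1) s = r + 1 from by omega,
      show min r s = r from by omega]
    ring
  · subst h
    rw [if_pos rfl, show min (r + 1) (r + 1) = r + 1 from by omega,
      show min r (r + 1) = r from by omega, show min (r + 1) r = r from by omega,
      show min r r = r from by omega, show m + 1 - (r + 1) = m - r from by omega]
    ring
  · rw [if_neg (by omega), show min (r + 1) (s + 1) = s + 1 from by omega,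
      show min r (s + 1) = s + 1 from by omega, show min (r + 1) s = s from by omega,
      show min r s = s from by omega]
    ring

variable (N m : ℕ)

def rshift (p : Fin N × Fin m) : Option (Fin N × Fin m) :=
  if (p.1.1 + 1) % 2 = 0 then
    (if h : p.2.1 + 1 < m then some (p.1, ⟨p.2.1 + 1, h⟩) else none)
  else
    (if 0 < p.2.1 then some (p.1, ⟨p.2.1 - 1, lt_of_le_of_lt (Nat.sub_le _ _) p.2.2⟩) else none)

def cshift (q : Fin N × Fin m) : Option (Fin N × Fin m) :=
  if 0 < q.2.1 then some (q.1, ⟨q.2.1 - 1, lt_of_le_of_lt (Nat.sub_le _ _) q.2.2⟩) else none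

def Tm : Matrix (Fin N × Fin m) (Fin N × Fin m) R := fun p p' =>
  (if p' = p then 1 else 0) - (if rshift N m p = some p' then 1 else 0)

def Um : Matrix (Fin N × Fin m) (Fin N × Fin m) R := fun q' q =>
  (if q' = q then 1 else 0) - (if cshift N m q = some q' then 1 else 0)

def pmap (p : Fin N × Fin m) : Fin N × Fin m :=
  (p.1, if (p.1.1 + 1) % 2 = 0 then p.2.rev else p.2)

def Pm : Matrix (Fin N × Fin m) (Fin N × Fin m) R := fun p p' =>
  if p' = pmap N m p then 1 else 0

variable (x : ℕ → ℕ → ℕ → R)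

def Dm : Matrix (Fin N × Fin m) (Fin N × Fin m) R := fun p q =>
  if p.2 = q.2 then x (p.1.1 + 1) (q.1.1 + 1) (m - q.2.1) - x (p.1.1 + 1) (q.1.1 + 1) (m + 1 - q.2.1)
  else 0

def Mm : Matrix (Fin N × Fin m) (Fin N × Fin m) R := Matrix.of fun p q =>
  if (p.1.1 + 1) % 2 = 0 then x (p.1.1 + 1) (q.1.1 + 1) (max (p.2.1 + 1) (m + 1 - (q.2.1 + 1)))
  else x (p.1.1 + 1) (q.1.1 + 1) (m + 1 - min (p.2.1 + 1) (q.2.1 + 1))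

def Wm : Matrix (Fin N × Fin m) (Fin N × Fin m) R := Matrix.of fun p q =>
  if (p.1.1 + 1) % 2 = 0 then
    x (p.1.1 + 1) (q.1.1 + 1) (max (p.2.1 + 1) (m - q.2.1)) -
      x (p.1.1 + 1) (q.1.1 + 1) (max (p.2.1 + 2) (m - q.2.1))
  else
    x (p.1.1 + 1) (q.1.1 + 1) (m + 1 - min (p.2.1 + 1) (q.2.1 + 1)) -
      x (p.1.1 + 1) (q.1.1 + 1) (m + 1 - min p.2.1 (q.2.1 + 1))

lemma Tm_mul_apply (A : Matrix (Fin N × Fin m) (Fin N × Fin m) R) (p q) :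
    ((Tm N m : Matrix _ _ R) * A) p q = A p q - (rshift N m p).elim 0 (fun p' => A p' q) := by
  rw [mul_apply]
  simp only [Tm, sub_mul]
  rw [Finset.sum_sub_distrib, sum_delta_mul, sum_opt_mul]

lemma mul_Um_apply (A : Matrix (Fin N × Fin m) (Fin N × Fin m) R) (p q) :
    (A * (Um N m : Matrix _ _ R)) p q = A p q - (cshift N m q).elim 0 (fun q' => A p q') := by
  rw [mul_apply]
  simp only [Um, mul_sub]
  rw [Finset.sum_sub_distrib, sum_mul_delta, sum_mul_opt]

lemma Pm_mul_apply (A : Matrix (Fin N × Fin m) (Fin N × Fin m) R) (p q) :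
    ((Pm N m : Matrix _ _ R) * A) p q = A (pmap N m p) q := by
  rw [mul_apply]
  simp only [Pm]
  rw [sum_delta_mul]

lemma TM_eq (hx : ∀ i j, x i j (m + 1) = 0) :
    (Tm N m : Matrix _ _ R) * Mm N m x = Wm N m x := by
  ext p q
  rw [Tm_mul_apply]
  obtain ⟨⟨i, hi⟩, r, hr⟩ := p
  obtain ⟨⟨j, hj⟩, s, hs⟩ := q
  simp only [Mm, Wm, rshift, of_apply]
  by_cases hpar : (i + 1) % 2 = 0
  · simp only [hpar, if_true, eq_self_iff_true]
    rcases Nat.lt_or_ge (r + 1) m with h | h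
    · rw [dif_pos h]
      simp only [Option.elim_some]
      rw [if_pos hpar, show m + 1 - (s + 1) = m - s from by omega,
        show r + 1 + 1 = r + 2 from by omega]
    · rw [dif_neg (by omega)]
      simp only [Option.elim_none]
      rw [show max (r + 2) (m - s) = m + 1 from by omega, hx,
        show m + 1 - (s + 1) = m - s from by omega, sub_zero]
  · simp only [hpar, if_false, ite_false]
    rcases Nat.lt_or_ge 0 r with h | h
    · rw [if_pos h]
      simp only [Option.elim_some]
      rw [if_neg hpar, show r - 1 + 1 = r from by omega]
    · rw [if_neg (by omega)]
      simp only [Option.elim_none]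
      rw [show min r (s + 1) = 0 from by omega, show m + 1 - 0 = m + 1 from rfl, hx, sub_zero]

lemma WU_eq : (Wm N m x : Matrix _ _ R) * Um N m = Pm N m * Dm N m x := by
  ext p q
  rw [mul_Um_apply, Pm_mul_apply]
  obtain ⟨⟨i, hi⟩, r, hr⟩ := p
  obtain ⟨⟨j, hj⟩, s, hs⟩ := q
  simp only [Wm, Dm, pmap, cshift, of_apply]
  by_cases hpar : (i + 1) % 2 = 0
  · simp only [hpar, if_true, eq_self_iff_true]
    have hc : ((Fin.rev ⟨r, hr⟩ : Fin m) = (⟨s, hs⟩ : Fin m)) ↔ r + s + 1 = m := by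
      simp only [Fin.ext_iff, Fin.val_rev, Fin.val_mk]; omega
    rcases Nat.lt_or_ge 0 s with h | h
    · rw [if_pos h]
      simp only [Option.elim_some]
      rw [show m - (s - 1) = m + 1 - s from by omega]
      simp only [hc]
      exact evenEntry m (x (i + 1) (j + 1)) r s hr hs
    · have hs0 : s = 0 := by omega
      subst hs0
      rw [if_neg (by omega)]
      simp only [Option.elim_none, hc, sub_zero]
      rcases Nat.lt_or_ge (r + 1) m with h2 | h2
      · rw [if_neg (by omega), show max (r + 1) (m - 0) = m - 0 from by omega,
          show max (r + 2) (m - 0) = m - 0 from by omega]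
        ring
      · rw [if_pos (by omega), show max (r + 1) (m - 0) = m - 0 from by omega,
          show max (r + 2) (m - 0) = m + 1 - 0 from by omega]
  · simp only [hpar, if_false, ite_false]
    have hc : ((⟨r, hr⟩ : Fin m) = (⟨s, hs⟩ : Fin m)) ↔ r = s := by
      rw [Fin.ext_iff]
    rcases Nat.lt_or_ge 0 s with h | h
    · rw [if_pos h]
      simp only [Option.elim_some]
      rw [show s - 1 + 1 = s from by omega]
      simp only [hc]
      exact oddEntry m (x (i + 1) (j + 1)) r s hr hs
    · have hs0 : s = 0 := by omega
      subst hs0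
      rw [if_neg (by omega)]
      simp only [Option.elim_none, hc, sub_zero]
      rcases Nat.eq_or_lt_of_le (Nat.zero_le r) with h2 | h2
      · have hr0 : r = 0 := h2.symm
        subst hr0
        rw [if_pos rfl, show min (0 + 1) 1 = 1 from by omega, show min 0 1 = 0 from by omega,
          show m + 1 - 1 = m - 0 from by omega]
      · rw [if_neg (by omega), show min (r + 1) 1 = 1 from by omega,
          show min r 1 = 1 from by omega]
        ring



lemma neg_one_pow_congr (a b : ℕ) (h : a % 2 = b % 2) : (-1 : R) ^ a = (-1) ^ b := by
  rw [neg_one_pow_eq_pow_mod_two, h, ← neg_one_pow_eq_pow_mod_two]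

def RevM (m : ℕ) : Matrix (Fin m) (Fin m) R := Matrix.of fun r s =>
  if r.1 + s.1 + 1 = m then 1 else 0

lemma det_RevM : ∀ m : ℕ, (RevM (R := R) m).det = (-1 : R) ^ (m / 2) := by
  intro m
  induction m with
  | zero => simp [Matrix.det_isEmpty]
  | succ n ih =>
    rw [Matrix.det_succ_row_zero, Finset.sum_eq_single (Fin.last n)]
    · have hsub : (RevM (R := R) (n + 1)).submatrix Fin.succ (Fin.last n).succAbove
          = RevM (R := R) n := by
        ext r s
        simp only [Matrix.submatrix_apply, Fin.succAbove_last, RevM, Matrix.of_apply,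
          Fin.val_succ, Fin.coe_castSucc]
        exact if_congr (by omega) rfl rfl
      have he : RevM (R := R) (n + 1) 0 (Fin.last n) = 1 := by
        simp [RevM, Fin.val_last]
      rw [hsub, he, ih, Fin.val_last, mul_one]
      rw [← pow_add]
      rcases Nat.even_or_odd n with ⟨k, rfl⟩ | ⟨k, rfl⟩
      · rw [show k + k + (k + k) / 2 = 2 * k + k from by omega,
          show (k + k + 1) / 2 = k from by omega, pow_add, pow_mul]
        simp
      · rw [show 2 * k + 1 + (2 * k + 1) / 2 = 2 * k + (k + 1) from by omega,
          show (2 * k + 1 + 1) / 2 = k + 1 from by omega, pow_add, pow_mul]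
        simp
    · intro b _ hb
      have : RevM (R := R) (n + 1) 0 b = 0 := by
        have : b.1 ≠ n := fun h => hb (Fin.ext (by simp [h, Fin.val_last]))
        simp only [RevM, Matrix.of_apply]
        rw [if_neg (by simpa using by omega)]
      rw [this, mul_zero, zero_mul]
    · intro h
      exact absurd (Finset.mem_univ _) h

lemma prod_if_even (a : R) (N : ℕ) :
    (∏ i ∈ range N, if (i + 1) % 2 = 0 then a else 1) = a ^ (N / 2) := by
  induction N with
  | zero => simp
  | succ n ih =>
    rw [prod_range_succ, ih]
    by_cases h : (n + 1) % 2 = 0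
    · rw [if_pos h, show (n + 1) / 2 = n / 2 + 1 from by omega, pow_succ]
    · rw [if_neg h, mul_one, show (n + 1) / 2 = n / 2 from by omega]


lemma det_Dm :
    (Dm N m x : Matrix _ _ R).det =
      ∏ k ∈ range m, Matrix.det (Matrix.of fun i j : Fin N =>
        x (i.1 + 1) (j.1 + 1) (k + 1) - x (i.1 + 1) (j.1 + 1) (k + 2)) := by
  have hD : (Dm N m x : Matrix _ _ R) = Matrix.blockDiagonal
      (fun k : Fin m => Matrix.of fun i j : Fin N =>
        x (i.1 + 1) (j.1 + 1) (m - k.1) - x (i.1 + 1) (j.1 + 1) (m + 1 - k.1)) := by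
    ext ⟨i, r⟩ ⟨j, s⟩
    simp only [Dm, Matrix.blockDiagonal_apply, Matrix.of_apply]
    by_cases h : r = s
    · subst h; simp
    · rw [if_neg h, if_neg h]
  rw [hD, Matrix.det_blockDiagonal]
  have h1 : ∀ k : Fin m,
      Matrix.det (Matrix.of fun i j : Fin N =>
        x (i.1 + 1) (j.1 + 1) (m - k.1) - x (i.1 + 1) (j.1 + 1) (m + 1 - k.1)) =
      Matrix.det (Matrix.of fun i j : Fin N =>
        x (i.1 + 1) (j.1 + 1) ((m - 1 - k.1) + 1) - x (i.1 + 1) (j.1 + 1) ((m - 1 - k.1) + 2)) := by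
    intro k
    have hk := k.2
    simp only [show m - k.1 = (m - 1 - k.1) + 1 from by omega,
      show m + 1 - k.1 = (m - 1 - k.1) + 2 from by omega]
  rw [Finset.prod_congr rfl (fun k _ => h1 k)]
  rw [Fin.prod_univ_eq_prod_range (fun k => Matrix.det (Matrix.of fun i j : Fin N =>
        x (i.1 + 1) (j.1 + 1) ((m - 1 - k) + 1) - x (i.1 + 1) (j.1 + 1) ((m - 1 - k) + 2))) m]
  exact Finset.prod_range_reflect (fun k => Matrix.det (Matrix.of fun i j : Fin N =>
        x (i.1 + 1) (j.1 + 1) (k + 1) - x (i.1 + 1) (j.1 + 1) (k + 2))) m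

lemma det_Pm : (Pm N m : Matrix _ _ R).det = (-1 : R) ^ (N / 2 * (m / 2)) := by
  have hP : Matrix.reindex (Equiv.prodComm (Fin N) (Fin m)) (Equiv.prodComm (Fin N) (Fin m))
        (Pm N m : Matrix _ _ R)
      = Matrix.blockDiagonal (fun i : Fin N =>
          if (i.1 + 1) % 2 = 0 then RevM m else (1 : Matrix (Fin m) (Fin m) R)) := by
    ext ⟨r, i⟩ ⟨s, j⟩
    simp only [Matrix.reindex_apply, Matrix.submatrix_apply, Equiv.prodComm_symm,
      Equiv.prodComm_apply, Prod.swap_prod_mk, Pm, pmap, Matrix.blockDiagonal_apply]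
    by_cases hij : i = j
    · subst hij
      rw [if_pos rfl]
      by_cases hpar : (i.1 + 1) % 2 = 0
      · simp only [hpar, ↓reduceIte]
        have hcond : ((i, s) = (i, Fin.rev r)) ↔ (r.1 + s.1 + 1 = m) := by
          simp only [Prod.mk.injEq, true_and, Fin.ext_iff, Fin.val_rev, Fin.val_mk]
          omega
        simp only [RevM, Matrix.of_apply, hcond]
      · simp only [hpar, ↓reduceIte, Matrix.one_apply]
        simp only [Prod.mk.injEq, true_and]
        exact if_congr eq_comm rfl rfl
    · rw [if_neg hij]; exact if_neg (fun h : (j, s) = _ => hij (congrArg Prod.fst h).symm)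
  rw [← Matrix.det_reindex_self (Equiv.prodComm (Fin N) (Fin m)) (Pm N m : Matrix _ _ R), hP,
    Matrix.det_blockDiagonal]
  have h2 : ∀ i : Fin N,
      Matrix.det (if (i.1 + 1) % 2 = 0 then RevM (R := R) m else (1 : Matrix (Fin m) (Fin m) R))
        = if (i.1 + 1) % 2 = 0 then (-1 : R) ^ (m / 2) else 1 := by
    intro i
    by_cases hpar : (i.1 + 1) % 2 = 0
    · rw [if_pos hpar, if_pos hpar, det_RevM]
    · rw [if_neg hpar, if_neg hpar, Matrix.det_one]
  rw [Finset.prod_congr rfl (fun i _ => h2 i),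
    Fin.prod_univ_eq_prod_range (fun i => if (i + 1) % 2 = 0 then (-1 : R) ^ (m / 2) else 1) N,
    prod_if_even, ← pow_mul, Nat.mul_comm]

def twist : Equiv.Perm (Fin N × Fin m) :=
  Function.Involutive.toPerm
    (fun p => (p.1, if (p.1.1 + 1) % 2 = 0 then p.2 else p.2.rev))
    (by intro p; by_cases h : (p.1.1 + 1) % 2 = 0 <;> simp [h, Fin.rev_rev])

def ordE : (Fin N × Fin m) ≃ Fin (N * m) := (twist N m).trans finProdFinEquiv

lemma ordE_val (p : Fin N × Fin m) :
    ((ordE N m p) : ℕ) = (if (p.1.1 + 1) % 2 = 0 then p.2.1 else m - (p.2.1 + 1)) + m * p.1.1 := by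
  have ht : twist N m p = (p.1, if (p.1.1 + 1) % 2 = 0 then p.2 else p.2.rev) := by
    rfl
  rw [ordE, Equiv.trans_apply, ht, finProdFinEquiv_apply_val]
  by_cases h : (p.1.1 + 1) % 2 = 0
  · rw [if_pos h, if_pos h]
  · rw [if_neg h, if_neg h, Fin.val_rev]

lemma rshift_ord {p p' : Fin N × Fin m} (h : rshift N m p = some p') :
    ((ordE N m p) : ℕ) < ((ordE N m p') : ℕ) := by
  obtain ⟨a, b⟩ := p
  have hb : (b : ℕ) < m := b.2
  unfold rshift at h
  dsimp only at h
  split_ifs at h with hpar hlt h0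
  all_goals first
    | exact Option.noConfusion h
    | (obtain rfl := Option.some.inj h
       rw [ordE_val, ordE_val]
       dsimp only
       split_ifs <;> omega)

lemma cshift_ord {q q' : Fin N × Fin m} (h : cshift N m q = some q') :
    ((finProdFinEquiv q') : ℕ) < ((finProdFinEquiv q) : ℕ) := by
  obtain ⟨a, b⟩ := q
  have hb : (b : ℕ) < m := b.2
  unfold cshift at h
  dsimp only at h
  split_ifs at h with h0
  · obtain rfl := Option.some.inj h
    rw [finProdFinEquiv_apply_val, finProdFinEquiv_apply_val]
    dsimp only
    omega

lemma det_Tm : (Tm N m : Matrix _ _ R).det = 1 := by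
  rw [← Matrix.det_reindex_self (ordE N m) (Tm N m : Matrix _ _ R)]
  have htri : ((Matrix.reindex (ordE N m) (ordE N m)) (Tm N m : Matrix _ _ R)).BlockTriangular
      id := by
    intro a b hab
    simp only [Matrix.reindex_apply, Matrix.submatrix_apply, Tm]
    have hab' : (b : ℕ) < (a : ℕ) := hab
    have h1 : ¬((ordE N m).symm b = (ordE N m).symm a) := by
      intro h
      have := congrArg (ordE N m) h
      rw [Equiv.apply_symm_apply, Equiv.apply_symm_apply] at this
      omega
    have h2 : ¬(rshift N m ((ordE N m).symm a) = some ((ordE N m).symm b)) := by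
      intro h
      have := rshift_ord N m h
      rw [Equiv.apply_symm_apply, Equiv.apply_symm_apply] at this
      omega
    rw [if_neg h1, if_neg h2, sub_zero]
  rw [Matrix.det_of_upperTriangular htri]
  apply Finset.prod_eq_one
  intro a _
  simp only [Matrix.reindex_apply, Matrix.submatrix_apply, Tm]
  rw [if_neg (fun h => absurd (rshift_ord N m h) (lt_irrefl _)), sub_zero, if_pos trivial]

lemma det_Um : (Um N m : Matrix _ _ R).det = 1 := by
  rw [← Matrix.det_reindex_self (finProdFinEquiv) (Um N m : Matrix _ _ R)]
  have htri : ((Matrix.reindex finProdFinEquiv finProdFinEquiv)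
      (Um N m : Matrix _ _ R)).BlockTriangular id := by
    intro a b hab
    simp only [Matrix.reindex_apply, Matrix.submatrix_apply, Um]
    have hab' : (b : ℕ) < (a : ℕ) := hab
    have h1 : ¬(finProdFinEquiv.symm a = finProdFinEquiv.symm b) := by
      intro h
      have := congrArg finProdFinEquiv h
      rw [Equiv.apply_symm_apply, Equiv.apply_symm_apply] at this
      omega
    have h2 : ¬(cshift N m (finProdFinEquiv.symm b) = some (finProdFinEquiv.symm a)) := by
      intro h
      have := cshift_ord N m h
      rw [Equiv.apply_symm_apply, Equiv.apply_symm_apply] at this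
      omega
    rw [if_neg h1, if_neg h2, sub_zero]
  rw [Matrix.det_of_upperTriangular htri]
  apply Finset.prod_eq_one
  intro a _
  simp only [Matrix.reindex_apply, Matrix.submatrix_apply, Um]
  rw [if_neg (fun h => absurd (cshift_ord N m h) (lt_irrefl _)), sub_zero, if_pos trivial]


lemma main_det (hx : ∀ i j, x i j (m + 1) = 0) :
    (Mm N m x : Matrix _ _ R).det =
      (-1 : R) ^ ((N / 2) * (m / 2)) * ∏ k ∈ Finset.range m,
        Matrix.det (Matrix.of fun i j : Fin N =>
          x (i.1 + 1) (j.1 + 1) (k + 1) - x (i.1 + 1) (j.1 + 1) (k + 2)) := by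
  have h1 : (Tm N m : Matrix _ _ R) * Mm N m x * Um N m = Pm N m * Dm N m x := by
    rw [TM_eq N m x hx, WU_eq]
  have h2 := congrArg Matrix.det h1
  rw [Matrix.det_mul, Matrix.det_mul, Matrix.det_mul, det_Tm, det_Um, one_mul, mul_one,
    det_Pm, det_Dm] at h2
  exact h2

end BlockHookAux

theorem block_hook_det_E {R : Type*} [CommRing R] (N m : ℕ) (x : ℕ → ℕ → ℕ → R)
    (hx : ∀ i j, x i j (m + 1) = 0) :
    Matrix.det (Matrix.of fun p q : Fin N × Fin m =>
      if (p.1.1 + 1) % 2 = 0 then x (p.1.1 + 1) (q.1.1 + 1) (max (p.2.1 + 1) (m + 1 - (q.2.1 + 1))) else x (p.1.1 + 1) (q.1.1 + 1) (m + 1 - min (p.2.1 + 1) (q.2.1 + 1))) =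
    (-1 : R) ^ ((N / 2) * (m / 2)) * ∏ k ∈ Finset.range m, Matrix.det (Matrix.of fun i j : Fin N =>
      x (i.1 + 1) (j.1 + 1) (k + 1) - x (i.1 + 1) (j.1 + 1) (k + 2)) := BlockHookAux.main_det N m x hx
end

section
/- For each pair $(i,j)$ with $1 \le i,j \le N$, let $x^{(i,j)}_1,\dots,x^{(i,j)}_m$ be elements of a commutative ring with $x^{(i,j)}_{m+1}=0$. Let $E'(N,m)$ be the $Nm\times Nm$ block matrix whose $(i,j)$ block has $(r,s)$ entry $x^{(i,j)}_{\max(r,\,m+1-s)}$ when $i$ is odd, and $x^{(i,j)}_{m+1-\min(r,s)}$ when $i$ is even. Then $\det(E'(N,m)) = (-1)^{\lceil N/2\rceil \cdot \lfloor m/2\rfloor}\prod_{k=1}^{m}\det(X_{(k,k+1)})$, where $X_{(k,k+1)}$ is the $N\times N$ matrix with $(i,j)$ entry $x^{(i,j)}_k - x^{(i,j)}_{k+1}$. -/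
open Matrix Finset

section BlockHookAux

variable {R : Type*} [CommRing R]

/-- anti-diagonal identity matrix -/
private def Jmat (R : Type*) [CommRing R] (n : ℕ) : Matrix (Fin n) (Fin n) R :=
  Matrix.of fun r u => if u = Fin.rev r then 1 else 0

private lemma det_Jmat (R : Type*) [CommRing R] (n : ℕ) :
    (Jmat R n).det = (-1 : R) ^ (n / 2) := by
  induction n with
  | zero => simp [Jmat]
  | succ n ih =>
    rw [Matrix.det_succ_row_zero]
    rw [Fintype.sum_eq_single (Fin.last n) (fun j hj => by
      have h0 : Jmat R (n+1) 0 j = 0 := by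
        simp only [Jmat, Matrix.of_apply, Fin.rev_zero, ite_eq_right_iff]
        intro h; exact absurd h hj
      simp [h0])]
    have hm : (Jmat R (n+1)).submatrix Fin.succ (Fin.last n).succAbove = Jmat R n := by
      ext r u
      simp only [Jmat, Matrix.submatrix_apply, Matrix.of_apply, Fin.succAbove_last]
      have h : (Fin.castSucc u = Fin.rev r.succ) ↔ (u = Fin.rev r) := by
        rw [Fin.rev_succ, Fin.castSucc_inj]
      simp [h]
    have h1 : Jmat R (n+1) 0 (Fin.last n) = 1 := by
      simp [Jmat, Fin.rev_zero]
    rw [hm, ih, h1]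
    simp only [Fin.val_last, mul_one]
    rcases Nat.even_or_odd n with ⟨l, hl⟩ | ⟨l, hl⟩
    · subst hl
      have e1 : l + l = 2 * l := by omega
      have e2 : (2 * l + 1) / 2 = l := by omega
      have e3 : 2 * l / 2 = l := by omega
      rw [e1, e2, e3, pow_mul]
      norm_num
    · subst hl
      have e1 : 2 * l + 1 + 1 = 2 * (l + 1) := by omega
      have e2 : (2 * l + 1 + 1) / 2 = l + 1 := by omega
      have e3 : (2 * l + 1) / 2 = l := by omega
      rw [e2, e3]
      have hodd : (-1 : R) ^ (2 * l + 1) = -1 := Odd.neg_one_pow ⟨l, by ring⟩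
      rw [hodd, pow_succ]
      ring

private def KL (m : ℕ) : Matrix (Fin m) (Fin m) R :=
  Matrix.of fun r t => if t ≤ r then 1 else 0

private def KJ (m : ℕ) : Matrix (Fin m) (Fin m) R :=
  Matrix.of fun r t => if t ≤ Fin.rev r then 1 else 0

private def Uv (m : ℕ) : Matrix (Fin m) (Fin m) R :=
  Matrix.of fun t s => if t ≤ s then 1 else 0

private lemma det_KL (m : ℕ) : (KL m : Matrix (Fin m) (Fin m) R).det = 1 := by
  rw [Matrix.det_of_lowerTriangular (KL m) (fun i j h => by
    simp only [KL, Matrix.of_apply, ite_eq_right_iff]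
    intro hji; exact absurd hji (not_le.mpr h))]
  simp [KL]

private lemma det_Uv (m : ℕ) : (Uv m : Matrix (Fin m) (Fin m) R).det = 1 := by
  have : (Uv m : Matrix (Fin m) (Fin m) R) = (KL m)ᵀ := by
    ext t s; simp [Uv, KL, Matrix.transpose_apply]
  rw [this, Matrix.det_transpose, det_KL]

private lemma KJ_eq (m : ℕ) : (KJ m : Matrix (Fin m) (Fin m) R) = Jmat R m * KL m := by
  ext r t
  rw [Matrix.mul_apply]
  have hterm : ∀ u : Fin m, Jmat R m r u * KL m u t =
      if u = Fin.rev r then (if t ≤ u then (1 : R) else 0) else 0 := by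
    intro u
    by_cases h : u = Fin.rev r <;> by_cases h2 : t ≤ u <;> simp [Jmat, KL, h, h2]
  rw [Finset.sum_congr rfl fun u _ => hterm u, Finset.sum_ite_eq' Finset.univ (Fin.rev r)]
  simp [KJ]

private lemma det_KJ (m : ℕ) :
    (KJ m : Matrix (Fin m) (Fin m) R).det = (-1 : R) ^ (m / 2) := by
  rw [KJ_eq, Matrix.det_mul, det_Jmat, det_KL, mul_one]

private def Kblk (m c : ℕ) : Matrix (Fin m) (Fin m) R :=
  if c % 2 = 1 then KJ m else KL m

private lemma det_Kblk (m c : ℕ) :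
    (Kblk m c : Matrix (Fin m) (Fin m) R).det =
      if c % 2 = 1 then (-1 : R) ^ (m / 2) else 1 := by
  unfold Kblk
  split
  · rw [det_KJ]
  · rw [det_KL]

/-- determinant of a block-diagonal matrix indexed the "wrong" way round -/
private lemma det_bigBlock (N m : ℕ) (B : Fin N → Matrix (Fin m) (Fin m) R) :
    (Matrix.of fun p q : Fin N × Fin m =>
      if p.1 = q.1 then B p.1 p.2 q.2 else 0).det = ∏ i, (B i).det := by
  have h : (Matrix.of fun p q : Fin N × Fin m =>
      if p.1 = q.1 then B p.1 p.2 q.2 else 0) =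
      Matrix.reindex (Equiv.prodComm (Fin m) (Fin N)) (Equiv.prodComm (Fin m) (Fin N))
        (Matrix.blockDiagonal B) := by
    ext ⟨i, r⟩ ⟨j, s⟩
    simp [Matrix.blockDiagonal_apply]
  rw [h, Matrix.det_reindex_self, Matrix.det_blockDiagonal]

/-- the key telescoping identity -/
private lemma hook_sum_s9 (m : ℕ) (y : ℕ → R) (hy : y (m + 1) = 0) (a b : Fin m) :
    (∑ t : Fin m, (if t ≤ a then (1 : R) else 0) *
      ((y (m - t.1) - y (m - t.1 + 1)) * (if t ≤ b then 1 else 0))) =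
    y (m - min a.1 b.1) := by
  set f : ℕ → R := fun u => y (m + 1 - u) with hf
  have key : ∀ t : Fin m, (if t ≤ a then (1 : R) else 0) *
      ((y (m - t.1) - y (m - t.1 + 1)) * (if t ≤ b then 1 else 0)) =
      (fun u : ℕ => if u < min a.1 b.1 + 1 then f (u + 1) - f u else 0) t.1 := by
    intro t
    have ht := t.2
    have e1 : m - t.1 = m + 1 - (t.1 + 1) := by omega
    have e2 : m - t.1 + 1 = m + 1 - t.1 := by omega
    simp only [Fin.le_def]
    by_cases h1 : (t : ℕ) ≤ (a : ℕ) <;> by_cases h2 : (t : ℕ) ≤ (b : ℕ) <;>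
      simp only [h1, h2, if_true, if_false, one_mul, mul_one, mul_zero, zero_mul, hf] <;>
      first
        | rw [if_pos (by omega), e2, e1]
        | rw [if_neg (by omega)]
  rw [Finset.sum_congr rfl (fun t _ => key t)]
  rw [Fin.sum_univ_eq_sum_range (fun u : ℕ => if u < min a.1 b.1 + 1 then f (u + 1) - f u else 0) m]
  rw [← Finset.sum_filter]
  have hfil : (Finset.range m).filter (fun u => u < min a.1 b.1 + 1) =
      Finset.range (min a.1 b.1 + 1) := by
    ext u
    simp only [Finset.mem_filter, Finset.mem_range]
    have := a.2; have := b.2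
    omega
  rw [hfil, Finset.sum_range_sub f (min a.1 b.1 + 1)]
  simp only [hf]
  have e3 : m + 1 - (min a.1 b.1 + 1) = m - min a.1 b.1 := by omega
  have e4 : m + 1 - 0 = m + 1 := by omega
  rw [e3, e4, hy, sub_zero]

private lemma prod_range_parity (ε : R) (N : ℕ) :
    (∏ i ∈ Finset.range N, if (i + 1) % 2 = 1 then ε else 1) = ε ^ ((N + 1) / 2) := by
  induction N with
  | zero => simp
  | succ n ih =>
    rw [Finset.prod_range_succ, ih]
    rcases Nat.even_or_odd n with ⟨l, hl⟩ | ⟨l, hl⟩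
    · have h1 : (n + 1) % 2 = 1 := by omega
      have h2 : (n + 1) / 2 = (n + 1 + 1) / 2 - 1 := by omega
      have h3 : (n + 1 + 1) / 2 = (n + 1) / 2 + 1 := by omega
      rw [if_pos h1, h3, pow_succ]
    · have h1 : ¬((n + 1) % 2 = 1) := by omega
      have h3 : (n + 1 + 1) / 2 = (n + 1) / 2 := by omega
      rw [if_neg h1, h3, mul_one]

end BlockHookAux

theorem block_hook_det_E' {R : Type*} [CommRing R] (N m : ℕ) (x : ℕ → ℕ → ℕ → R)
    (hx : ∀ i j, x i j (m + 1) = 0) :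
    Matrix.det (Matrix.of fun p q : Fin N × Fin m =>
      if (p.1.1 + 1) % 2 = 1 then x (p.1.1 + 1) (q.1.1 + 1) (max (p.2.1 + 1) (m + 1 - (q.2.1 + 1))) else x (p.1.1 + 1) (q.1.1 + 1) (m + 1 - min (p.2.1 + 1) (q.2.1 + 1))) =
    (-1 : R) ^ (((N + 1) / 2) * (m / 2)) * ∏ k ∈ Finset.range m, Matrix.det (Matrix.of fun i j : Fin N =>
      x (i.1 + 1) (j.1 + 1) (k + 1) - x (i.1 + 1) (j.1 + 1) (k + 2)) := by
  classical
  -- the big matrices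
  set Kbig : Matrix (Fin N × Fin m) (Fin N × Fin m) R :=
    Matrix.of fun p q => if p.1 = q.1 then (Kblk m (p.1.1 + 1) : Matrix (Fin m) (Fin m) R) p.2 q.2 else 0 with hK
  set Ubig : Matrix (Fin N × Fin m) (Fin N × Fin m) R :=
    Matrix.of fun p q => if p.1 = q.1 then (Uv m : Matrix (Fin m) (Fin m) R) p.2 q.2 else 0 with hU
  set Dbig : Matrix (Fin N × Fin m) (Fin N × Fin m) R :=
    Matrix.blockDiagonal (fun t : Fin m => Matrix.of fun i j : Fin N =>
      x (i.1 + 1) (j.1 + 1) (m - t.1) - x (i.1 + 1) (j.1 + 1) (m - t.1 + 1)) with hD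
  have hDU : ∀ p q : Fin N × Fin m, (Dbig * Ubig) p q =
      (x (p.1.1 + 1) (q.1.1 + 1) (m - p.2.1) - x (p.1.1 + 1) (q.1.1 + 1) (m - p.2.1 + 1)) *
        (if p.2 ≤ q.2 then 1 else 0) := by
    intro p q
    rw [Matrix.mul_apply, Fintype.sum_prod_type]
    have hterm : ∀ (j' : Fin N) (u : Fin m),
        Dbig (p.1, p.2) (j', u) * Ubig (j', u) (q.1, q.2) =
        if u = p.2 then (if j' = q.1 then
          (x (p.1.1 + 1) (q.1.1 + 1) (m - p.2.1) - x (p.1.1 + 1) (q.1.1 + 1) (m - p.2.1 + 1)) *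
            (if p.2 ≤ q.2 then 1 else 0) else 0) else 0 := by
      intro j' u
      rcases eq_or_ne u p.2 with h2 | h2
      · subst h2
        rcases eq_or_ne j' q.1 with h1 | h1
        · subst h1
          simp [hD, hU, Uv, Matrix.blockDiagonal_apply, mul_ite]
        · simp [hD, hU, Uv, Matrix.blockDiagonal_apply, h1]
      · simp [hD, hU, Matrix.blockDiagonal_apply, Ne.symm h2, h2]
    rw [Finset.sum_congr rfl fun j' _ => Finset.sum_congr rfl fun u _ => hterm j' u]
    simp only [Finset.sum_ite_eq', Finset.mem_univ, if_true]
  have hfact : (Matrix.of fun p q : Fin N × Fin m =>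
      if (p.1.1 + 1) % 2 = 1 then x (p.1.1 + 1) (q.1.1 + 1) (max (p.2.1 + 1) (m + 1 - (q.2.1 + 1))) else x (p.1.1 + 1) (q.1.1 + 1) (m + 1 - min (p.2.1 + 1) (q.2.1 + 1)))
      = Kbig * (Dbig * Ubig) := by
    ext ⟨i, r⟩ ⟨j, s⟩
    rw [Matrix.mul_apply, Fintype.sum_prod_type]
    simp only [hDU, hK, Matrix.of_apply, ite_mul, zero_mul]
    rw [Finset.sum_comm]
    simp only [Finset.sum_ite_eq, Finset.mem_univ, if_true]
    by_cases hpar : (i.1 + 1) % 2 = 1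
    · simp only [hpar, if_true, Kblk, KJ, Matrix.of_apply]
      rw [hook_sum_s9 m (x (i.1 + 1) (j.1 + 1)) (hx _ _) (Fin.rev r) s]
      have hr := r.2; have hs := s.2
      congr 1
      simp only [Fin.val_rev]
      omega
    · simp only [hpar, if_true, if_false, Kblk, KL, Matrix.of_apply]
      rw [hook_sum_s9 m (x (i.1 + 1) (j.1 + 1)) (hx _ _) r s]
      have hr := r.2; have hs := s.2
      congr 1
      omega
  rw [hfact, Matrix.det_mul, Matrix.det_mul]
  have hdetK : Kbig.det = (-1 : R) ^ (((N + 1) / 2) * (m / 2)) := by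
    rw [hK, det_bigBlock N m (fun i => Kblk m (i.1 + 1))]
    rw [Finset.prod_congr rfl fun (i : Fin N) _ => det_Kblk (R := R) m (i.1 + 1),
      Fin.prod_univ_eq_prod_range (fun c => if (c + 1) % 2 = 1 then (-1 : R) ^ (m / 2) else 1) N,
      prod_range_parity ((-1 : R) ^ (m / 2)) N, ← pow_mul, mul_comm]
  have hdetU : Ubig.det = 1 := by
    rw [hU, det_bigBlock N m (fun _ => Uv m)]
    simp [det_Uv]
  have hdetD : Dbig.det = ∏ k ∈ Finset.range m, Matrix.det (Matrix.of fun i j : Fin N =>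
      x (i.1 + 1) (j.1 + 1) (k + 1) - x (i.1 + 1) (j.1 + 1) (k + 2)) := by
    rw [hD, Matrix.det_blockDiagonal]
    rw [Fin.prod_univ_eq_prod_range (fun t : ℕ => Matrix.det (Matrix.of fun i j : Fin N =>
      x (i.1 + 1) (j.1 + 1) (m - t) - x (i.1 + 1) (j.1 + 1) (m - t + 1))) m]
    rw [← Finset.prod_range_reflect]
    refine Finset.prod_congr rfl fun t ht => ?_
    rw [Finset.mem_range] at ht
    have e1 : m - (m - 1 - t) = t + 1 := by omega
    have e2 : m - (m - 1 - t) + 1 = t + 2 := by omega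
    rw [e2, e1]
  rw [hdetK, hdetU, hdetD, mul_one]
end

section
/- For each pair $(i,j)$ with $1 \le i,j \le N$, let $x^{(i,j)}_1,\dots,x^{(i,j)}_m$ be elements of a commutative ring with $x^{(i,j)}_{m+1}=0$. Let $F(N,m)$ be the $Nm\times Nm$ block matrix whose $(i,j)$ block has $(r,s)$ entry $x^{(i,j)}_{\max(r,s)}$ when $i$ is odd, and $x^{(i,j)}_{\max(m+1-r,\,s)}$ when $i$ is even. Then $\det(F(N,m)) = (-1)^{\lfloor N/2\rfloor \cdot \lfloor m/2\rfloor}\prod_{k=1}^{m}\det(X_{(k,k+1)})$, where $X_{(k,k+1)}$ is the $N\times N$ matrix with $(i,j)$ entry $x^{(i,j)}_k - x^{(i,j)}_{k+1}$. -/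
open Matrix Finset

private lemma neg_one_pow_succ_half {R : Type*} [CommRing R] (m : ℕ) :
    ((-1 : R)) ^ ((m + 1) / 2) = (-1) ^ m * (-1) ^ (m / 2) := by
  rcases Nat.even_or_odd m with ⟨a, rfl⟩ | ⟨a, rfl⟩
  · have h1 : (a + a + 1) / 2 = a := by omega
    have h2 : (a + a) / 2 = a := by omega
    rw [h1, h2, show a + a = 2 * a by omega, pow_mul]
    norm_num
  · have h1 : (2 * a + 1 + 1) / 2 = a + 1 := by omega
    have h2 : (2 * a + 1) / 2 = a := by omega
    rw [h1, h2, pow_succ, pow_succ, pow_mul]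
    norm_num [mul_comm]

private lemma det_antiones {R : Type*} [CommRing R] : ∀ (m : ℕ),
    (Matrix.of fun r k : Fin m => if m ≤ r.1 + k.1 + 1 then (1 : R) else 0).det
      = (-1) ^ (m / 2)
  | 0 => by simp
  | (m + 1) => by
    rw [Matrix.det_succ_row_zero]
    rw [Finset.sum_eq_single (Fin.last m)]
    · have h0 : (Matrix.of fun r k : Fin (m+1) => if m + 1 ≤ r.1 + k.1 + 1 then (1:R) else 0)
          0 (Fin.last m) = 1 := by simp
      have hsub : ((Matrix.of fun r k : Fin (m+1) => if m + 1 ≤ r.1 + k.1 + 1 then (1:R) else 0).submatrix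
          Fin.succ (Fin.last m).succAbove) =
          (Matrix.of fun r k : Fin m => if m ≤ r.1 + k.1 + 1 then (1 : R) else 0) := by
        ext i j
        rw [Matrix.submatrix_apply, Fin.succAbove_last]
        simp only [Matrix.of_apply, Fin.val_succ, Fin.coe_castSucc]
        exact if_congr (by omega) rfl rfl
      rw [h0, hsub, det_antiones m, Fin.val_last, neg_one_pow_succ_half]
      ring
    · intro j _ hj
      have hj' : j.1 < m := by
        have := j.2
        rcases Nat.lt_or_ge j.1 m with h | h
        · exact h
        · exact absurd (by apply Fin.ext; rw [Fin.val_last]; omega) hj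
      have h0 : (Matrix.of fun r k : Fin (m+1) => if m + 1 ≤ r.1 + k.1 + 1 then (1:R) else 0)
          0 j = 0 := by
        simp only [Matrix.of_apply, Fin.val_zero, zero_add]
        rw [if_neg (by omega)]
      rw [h0]; ring
    · simp

private lemma telescope_sum {R : Type*} [CommRing R] (m t : ℕ) (ht : t < m)
    (f : ℕ → R) (hf : f (m + 1) = 0) :
    ∑ k ∈ Finset.range m, (if t ≤ k then f (k + 1) - f (k + 2) else 0) = f (t + 1) := by
  rw [← Finset.sum_filter]
  have hfil : (Finset.range m).filter (fun k => t ≤ k) = Finset.Ico t m := by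
    ext k; simp [Finset.mem_filter, Finset.mem_Ico, and_comm]
  rw [hfil, Finset.sum_Ico_eq_sum_range]
  have := Finset.sum_range_sub' (f := fun i => f (t + i + 1)) (n := m - t)
  calc ∑ i ∈ Finset.range (m - t), (f (t + i + 1) - f (t + i + 2))
      = ∑ i ∈ Finset.range (m - t), (f (t + i + 1) - f (t + (i+1) + 1)) := by
        apply Finset.sum_congr rfl; intro i _
        rw [show t + (i+1) + 1 = t + i + 2 by omega]
    _ = f (t + 0 + 1) - f (t + (m - t) + 1) := this
    _ = f (t + 1) := by
        rw [show t + (m - t) + 1 = m + 1 by omega, hf, show t + 0 + 1 = t + 1 by omega, sub_zero]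

private lemma card_odd_filter : ∀ (N : ℕ),
    ((Finset.range N).filter (fun i => ¬ (i + 1) % 2 = 1)).card = N / 2
  | 0 => by simp
  | (N + 1) => by
    rw [Finset.range_add_one, Finset.filter_insert]
    by_cases h : ¬ (N + 1) % 2 = 1
    · rw [if_pos h, Finset.card_insert_of_notMem (by simp), card_odd_filter N]
      omega
    · rw [if_neg h, card_odd_filter N]
      omega

private lemma det_uppertri_ones {R : Type*} [CommRing R] (m : ℕ) :
    (Matrix.of fun r k : Fin m => if r.1 ≤ k.1 then (1 : R) else 0).det = 1 := by
  rw [Matrix.det_of_upperTriangular]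
  · simp
  · intro i j hij
    simp only [Matrix.of_apply]
    exact if_neg (not_le.2 (Fin.lt_def.mp hij))

section Aux
variable {R : Type*} [CommRing R]

private def Lmat (R : Type*) [CommRing R] (N m : ℕ) :
    Matrix (Fin N × Fin m) (Fin N × Fin m) R := fun p q =>
  if p.1 = q.1 then
    (if (p.1.1 + 1) % 2 = 1 then (if p.2.1 ≤ q.2.1 then 1 else 0)
     else (if m ≤ p.2.1 + q.2.1 + 1 then 1 else 0))
  else 0

private def Mmat (R : Type*) [CommRing R] (N m : ℕ) (x : ℕ → ℕ → ℕ → R) :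
    Matrix (Fin N × Fin m) (Fin N × Fin m) R := fun p q =>
  if q.2.1 ≤ p.2.1 then
    x (p.1.1 + 1) (q.1.1 + 1) (p.2.1 + 1) - x (p.1.1 + 1) (q.1.1 + 1) (p.2.1 + 2)
  else 0

private lemma factorF (N m : ℕ) (x : ℕ → ℕ → ℕ → R) (hx : ∀ i j, x i j (m + 1) = 0) :
    (Matrix.of fun p q : Fin N × Fin m =>
      if (p.1.1 + 1) % 2 = 1 then x (p.1.1 + 1) (q.1.1 + 1) (max (p.2.1 + 1) (q.2.1 + 1))
      else x (p.1.1 + 1) (q.1.1 + 1) (max (m + 1 - (p.2.1 + 1)) (q.2.1 + 1)))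
    = Lmat R N m * Mmat R N m x := by
  ext ⟨i, r⟩ ⟨j, s⟩
  rw [Matrix.mul_apply, Fintype.sum_prod_type,
    Finset.sum_eq_single i
      (fun b _ hb => Finset.sum_eq_zero fun k _ => by
        simp only [Lmat]
        rw [if_neg (show ¬ ((i, r).1 = b) from fun h => hb h.symm), zero_mul])
      (fun h => absurd (Finset.mem_univ i) h)]
  have hr := r.2
  have hs := s.2
  by_cases hpar : (i.1 + 1) % 2 = 1
  · have key : ∀ k : Fin m, Lmat R N m (i, r) (i, k) * Mmat R N m x (i, k) (j, s)
        = (fun kk : ℕ => if max r.1 s.1 ≤ kk then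
            x (i.1 + 1) (j.1 + 1) (kk + 1) - x (i.1 + 1) (j.1 + 1) (kk + 2) else 0) k.1 := by
      intro k
      simp only [Lmat, Mmat, if_pos rfl]
      rw [if_pos hpar]
      beta_reduce
      split_ifs <;> first | ring1 | (exfalso; first | omega | exact ‹¬True› trivial)
    rw [Finset.sum_congr rfl fun k _ => key k,
      Fin.sum_univ_eq_sum_range (fun kk : ℕ => if max r.1 s.1 ≤ kk then
        x (i.1 + 1) (j.1 + 1) (kk + 1) - x (i.1 + 1) (j.1 + 1) (kk + 2) else 0) m,
      telescope_sum m (max r.1 s.1) (by omega) _ (hx _ _)]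
    simp only [Matrix.of_apply]
    rw [if_pos hpar]
    congr 1
    omega
  · have key : ∀ k : Fin m, Lmat R N m (i, r) (i, k) * Mmat R N m x (i, k) (j, s)
        = (fun kk : ℕ => if max (m - r.1 - 1) s.1 ≤ kk then
            x (i.1 + 1) (j.1 + 1) (kk + 1) - x (i.1 + 1) (j.1 + 1) (kk + 2) else 0) k.1 := by
      intro k
      simp only [Lmat, Mmat, if_pos rfl]
      rw [if_neg hpar]
      beta_reduce
      split_ifs <;> first | ring1 | (exfalso; first | omega | exact ‹¬True› trivial)
    rw [Finset.sum_congr rfl fun k _ => key k,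
      Fin.sum_univ_eq_sum_range (fun kk : ℕ => if max (m - r.1 - 1) s.1 ≤ kk then
        x (i.1 + 1) (j.1 + 1) (kk + 1) - x (i.1 + 1) (j.1 + 1) (kk + 2) else 0) m,
      telescope_sum m (max (m - r.1 - 1) s.1) (by omega) _ (hx _ _)]
    simp only [Matrix.of_apply]
    rw [if_neg hpar]
    congr 1
    omega

end Aux

section Dets
variable {R : Type*} [CommRing R]

private lemma detL (N m : ℕ) : (Lmat R N m).det = (-1 : R) ^ ((N / 2) * (m / 2)) := by
  classical
  set T : Fin N → Matrix (Fin m) (Fin m) R := fun i => Matrix.of fun r k =>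
    if (i.1 + 1) % 2 = 1 then (if r.1 ≤ k.1 then 1 else 0)
    else (if m ≤ r.1 + k.1 + 1 then 1 else 0) with hT
  have hL : Lmat R N m = (Matrix.blockDiagonal T).submatrix
      (Equiv.prodComm (Fin N) (Fin m)) (Equiv.prodComm (Fin N) (Fin m)) := by
    ext ⟨i, r⟩ ⟨j, k⟩
    simp only [Lmat, Matrix.submatrix_apply, Equiv.prodComm_apply, Prod.swap_prod_mk,
      Matrix.blockDiagonal_apply, hT, Matrix.of_apply]
  rw [hL, Matrix.det_submatrix_equiv_self, Matrix.det_blockDiagonal]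
  have hTd : ∀ i : Fin N, (T i).det = if (i.1 + 1) % 2 = 1 then (1 : R) else (-1) ^ (m / 2) := by
    intro i
    by_cases h : (i.1 + 1) % 2 = 1
    · rw [if_pos h]
      have : T i = Matrix.of fun r k : Fin m => if r.1 ≤ k.1 then (1 : R) else 0 := by
        ext r k; simp only [hT, Matrix.of_apply, if_pos h]
      rw [this, det_uppertri_ones]
    · rw [if_neg h]
      have : T i = Matrix.of fun r k : Fin m => if m ≤ r.1 + k.1 + 1 then (1 : R) else 0 := by
        ext r k; simp only [hT, Matrix.of_apply, if_neg h]
      rw [this, det_antiones]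
  rw [Finset.prod_congr rfl fun i _ => hTd i, Finset.prod_ite, Finset.prod_const_one,
    Finset.prod_const, one_mul]
  have hcard : (Finset.univ.filter fun i : Fin N => ¬ ((i.1 + 1) % 2 = 1)).card = N / 2 := by
    rw [Finset.card_filter,
      Fin.sum_univ_eq_sum_range (fun i => if ¬ ((i + 1) % 2 = 1) then 1 else 0) N,
      ← Finset.card_filter, card_odd_filter]
  rw [hcard, ← pow_mul, Nat.mul_comm]

private lemma detM (N m : ℕ) (x : ℕ → ℕ → ℕ → R) :
    (Mmat R N m x).det = ∏ k ∈ Finset.range m, Matrix.det (Matrix.of fun i j : Fin N =>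
      x (i.1 + 1) (j.1 + 1) (k + 1) - x (i.1 + 1) (j.1 + 1) (k + 2)) := by
  classical
  have hM : Mmat R N m x = ((Mmat R N m x).submatrix
      (Equiv.prodComm (Fin m) (Fin N)) (Equiv.prodComm (Fin m) (Fin N))).submatrix
      (Equiv.prodComm (Fin N) (Fin m)) (Equiv.prodComm (Fin N) (Fin m)) := by
    ext p q; rfl
  set M' : Matrix (Fin m × Fin N) (Fin m × Fin N) R := (Mmat R N m x).submatrix
      (Equiv.prodComm (Fin m) (Fin N)) (Equiv.prodComm (Fin m) (Fin N)) with hM'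
  rw [hM, Matrix.det_submatrix_equiv_self, ← Matrix.det_transpose]
  have htri : (M'ᵀ).BlockTriangular Prod.fst := by
    intro p q hlt
    simp only [Matrix.transpose_apply, hM', Matrix.submatrix_apply, Equiv.prodComm_apply,
      Prod.swap_prod_mk, Mmat]
    exact if_neg (by exact fun h => absurd (lt_of_le_of_lt (by exact_mod_cast h) (by exact hlt)) (lt_irrefl _))
  rw [htri.det_fintype]
  rw [← Fin.prod_univ_eq_prod_range (fun k => Matrix.det (Matrix.of fun i j : Fin N =>
      x (i.1 + 1) (j.1 + 1) (k + 1) - x (i.1 + 1) (j.1 + 1) (k + 2))) m]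
  apply Finset.prod_congr rfl
  intro k _
  let e : {p : Fin m × Fin N // p.1 = k} ≃ Fin N :=
    { toFun := fun p => p.1.2
      invFun := fun i => ⟨(k, i), rfl⟩
      left_inv := fun p => by
        obtain ⟨⟨k', i⟩, hp⟩ := p
        simp only at hp
        subst hp
        rfl
      right_inv := fun i => rfl }
  have hblock : (M'ᵀ).toSquareBlock Prod.fst k =
      ((Matrix.of fun i j : Fin N =>
        x (i.1 + 1) (j.1 + 1) (k.1 + 1) - x (i.1 + 1) (j.1 + 1) (k.1 + 2))ᵀ).submatrix e e := by
    ext p q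
    obtain ⟨⟨kp, ip⟩, hp⟩ := p
    obtain ⟨⟨kq, iq⟩, hq⟩ := q
    simp only at hp hq
    subst hp; subst hq
    simp only [Matrix.toSquareBlock_def, Matrix.transpose_apply, hM', Matrix.submatrix_apply,
      Equiv.prodComm_apply, Prod.swap_prod_mk, Mmat, Matrix.of_apply]
    refine (if_pos le_rfl).trans ?_
    rfl
  rw [hblock, Matrix.det_submatrix_equiv_self, Matrix.det_transpose]

end Dets


theorem block_hook_det_F {R : Type*} [CommRing R] (N m : ℕ) (x : ℕ → ℕ → ℕ → R)
    (hx : ∀ i j, x i j (m + 1) = 0) :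
    Matrix.det (Matrix.of fun p q : Fin N × Fin m =>
      if (p.1.1 + 1) % 2 = 1 then x (p.1.1 + 1) (q.1.1 + 1) (max (p.2.1 + 1) (q.2.1 + 1)) else x (p.1.1 + 1) (q.1.1 + 1) (max (m + 1 - (p.2.1 + 1)) (q.2.1 + 1))) =
    (-1 : R) ^ ((N / 2) * (m / 2)) * ∏ k ∈ Finset.range m, Matrix.det (Matrix.of fun i j : Fin N =>
      x (i.1 + 1) (j.1 + 1) (k + 1) - x (i.1 + 1) (j.1 + 1) (k + 2)) := by
  rw [factorF N m x hx, Matrix.det_mul, detL, detM]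
end

section
/- For each pair $(i,j)$ with $1 \le i,j \le N$, let $x^{(i,j)}_1,\dots,x^{(i,j)}_m$ be elements of a commutative ring with $x^{(i,j)}_{m+1}=0$. Let $F'(N,m)$ be the $Nm\times Nm$ block matrix whose $(i,j)$ block has $(r,s)$ entry $x^{(i,j)}_{\max(m+1-r,\,s)}$ when $i$ is odd, and $x^{(i,j)}_{\max(r,s)}$ when $i$ is even. Then $\det(F'(N,m)) = (-1)^{\lceil N/2\rceil \cdot \lfloor m/2\rfloor}\prod_{k=1}^{m}\det(X_{(k,k+1)})$, where $X_{(k,k+1)}$ is the $N\times N$ matrix with $(i,j)$ entry $x^{(i,j)}_k - x^{(i,j)}_{k+1}$. -/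
open Equiv Finset Matrix

lemma units_neg_one_pow_congr {a b : ℕ} (h : a % 2 = b % 2) : (-1 : ℤˣ)^a = (-1)^b := by
  rcases Nat.even_or_odd a with he | ho
  · have hb : Even b := Nat.even_iff.mpr (by rw [← h]; exact Nat.even_iff.mp he)
    rw [he.neg_one_pow, hb.neg_one_pow]
  · have hb : Odd b := Nat.odd_iff.mpr (by rw [← h]; exact Nat.odd_iff.mp ho)
    rw [ho.neg_one_pow, hb.neg_one_pow]

lemma rev_decompose (k : ℕ) :
    (Fin.revPerm : Equiv.Perm (Fin (k+2))) =
      Equiv.Perm.decomposeFin.symm (Fin.last (k+1), Fin.revPerm * finRotate (k+1)) := by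
  ext j
  induction j using Fin.cases with
  | zero =>
      rw [Equiv.Perm.decomposeFin_symm_apply_zero]
      simp
  | succ i =>
      rw [Equiv.Perm.decomposeFin_symm_apply_succ]
      simp only [Fin.revPerm_apply, Equiv.Perm.mul_apply, finRotate_succ_apply]
      rcases eq_or_ne i (Fin.last k) with h | h
      · subst h
        have h0 : (Fin.last k + 1 : Fin (k+1)) = 0 := by
          ext; simp [Fin.val_add]
        rw [h0]
        have h1 : ((0 : Fin (k+1)).rev).succ = Fin.last (k+1) := by
          ext; rw [Fin.val_succ, Fin.val_rev]; simp
        rw [h1, swap_apply_right]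
        rw [Fin.val_rev]
        simp
      · have hv : i.1 < k := by
          have := i.2
          simp [Fin.ext_iff] at h
          omega
        have ha : ((i + 1 : Fin (k+1)) : ℕ) = i.1 + 1 := by
          rw [Fin.val_add_one]
          simp [Fin.ext_iff, hv.ne]
        have hne0 : ((i+1 : Fin (k+1)).rev).succ ≠ 0 := Fin.succ_ne_zero _
        have hnel : ((i+1 : Fin (k+1)).rev).succ ≠ Fin.last (k+1) := by
          intro hcon
          rw [Fin.ext_iff, Fin.val_succ, Fin.val_rev, Fin.val_last, ha] at hcon
          omega
        rw [swap_apply_of_ne_of_ne hne0 hnel]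
        simp only [Fin.ext_iff, Fin.val_succ, Fin.val_rev, ha]
        omega

lemma sign_revPerm (m : ℕ) :
    Equiv.Perm.sign (Fin.revPerm : Equiv.Perm (Fin m)) = (-1) ^ (m / 2) := by
  induction m with
  | zero => simp [Subsingleton.elim (Fin.revPerm : Equiv.Perm (Fin 0)) 1]
  | succ n ih =>
      match n, ih with
      | 0, _ => simp [Subsingleton.elim (Fin.revPerm : Equiv.Perm (Fin 1)) 1]
      | (k+1), ih =>
          rw [rev_decompose k, Equiv.Perm.decomposeFin.symm_sign,
            if_neg (by simp [Fin.ext_iff]), _root_.map_mul, ih, sign_finRotate, Nat.add_sub_cancel, ← pow_add,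
            neg_one_mul, show -((-1:ℤˣ)^((k+1)/2+k)) = (-1)^((k+1)/2+k+1) by
              rw [pow_succ, mul_neg_one]]
          exact units_neg_one_pow_congr
            (by rcases Nat.even_or_odd k with ⟨j,rfl⟩|⟨j,rfl⟩ <;> omega)

lemma count_odd (N : ℕ) :
    (Finset.univ.filter (fun i : Fin N => (i.1 + 1) % 2 = 1)).card = (N + 1) / 2 := by
  rw [Finset.card_filter]
  rw [Fin.sum_univ_eq_sum_range (fun i => if (i+1)%2 = 1 then 1 else 0) N]
  induction N with
  | zero => simp
  | succ n ih =>
      rw [Finset.sum_range_succ, ih]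
      by_cases h : (n+1)%2 = 1 <;> simp [h] <;> omega

theorem block_hook_det_F' {R : Type*} [CommRing R] (N m : ℕ) (x : ℕ → ℕ → ℕ → R)
    (hx : ∀ i j, x i j (m + 1) = 0) :
    Matrix.det (Matrix.of fun p q : Fin N × Fin m =>
      if (p.1.1 + 1) % 2 = 1 then x (p.1.1 + 1) (q.1.1 + 1) (max (m + 1 - (p.2.1 + 1)) (q.2.1 + 1)) else x (p.1.1 + 1) (q.1.1 + 1) (max (p.2.1 + 1) (q.2.1 + 1))) =
    (-1 : R) ^ (((N + 1) / 2) * (m / 2)) * ∏ k ∈ Finset.range m, Matrix.det (Matrix.of fun i j : Fin N =>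
      x (i.1 + 1) (j.1 + 1) (k + 1) - x (i.1 + 1) (j.1 + 1) (k + 2)) := by
  classical
  set F : Matrix (Fin N × Fin m) (Fin N × Fin m) R :=
    Matrix.of (fun p q : Fin N × Fin m =>
      x (p.1.1 + 1) (q.1.1 + 1) (max (p.2.1 + 1) (q.2.1 + 1))) with hF
  set σ : Equiv.Perm (Fin N × Fin m) :=
    Equiv.prodCongrRight (fun i : Fin N =>
      if (i.1 + 1) % 2 = 1 then (Fin.revPerm : Equiv.Perm (Fin m)) else 1) with hσ
  -- Step 1 : the matrix is a row permutation of F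
  have hFp : (Matrix.of fun p q : Fin N × Fin m =>
      if (p.1.1 + 1) % 2 = 1 then x (p.1.1 + 1) (q.1.1 + 1) (max (m + 1 - (p.2.1 + 1)) (q.2.1 + 1))
      else x (p.1.1 + 1) (q.1.1 + 1) (max (p.2.1 + 1) (q.2.1 + 1)))
      = fun p => F (σ p) := by
    funext p q
    obtain ⟨i, r⟩ := p
    obtain ⟨j, s⟩ := q
    show (if (i.1 + 1) % 2 = 1 then x (i.1+1) (j.1+1) (max (m + 1 - (r.1+1)) (s.1+1))
      else x (i.1+1) (j.1+1) (max (r.1+1) (s.1+1))) = F (σ (i, r)) (j, s)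
    rw [hσ, Equiv.prodCongrRight_apply]
    by_cases h : (i.1 + 1) % 2 = 1
    · rw [if_pos h, if_pos h, hF]
      show _ = x (i.1+1) (j.1+1) (max ((Fin.revPerm r).1 + 1) (s.1+1))
      congr 1
      rw [Fin.revPerm_apply, Fin.val_rev]
      have := r.2
      omega
    · rw [if_neg h, if_neg h, hF]
      rfl
  rw [hFp]
  rw [show (fun p => F (σ p)) = F.submatrix (⇑σ) id from rfl, Matrix.det_permute σ F]
  -- Step 2 : sign of σ
  have hsign : Equiv.Perm.sign σ = (-1 : ℤˣ) ^ (((N + 1) / 2) * (m / 2)) := by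
    rw [hσ, Equiv.Perm.sign_prodCongrRight]
    have : ∀ i : Fin N, Equiv.Perm.sign
        (if (i.1 + 1) % 2 = 1 then (Fin.revPerm : Equiv.Perm (Fin m)) else 1)
        = if (i.1 + 1) % 2 = 1 then (-1 : ℤˣ) ^ (m / 2) else 1 := by
      intro i
      by_cases h : (i.1 + 1) % 2 = 1 <;> simp [h, sign_revPerm]
    rw [Finset.prod_congr rfl (fun i _ => this i), ← Finset.prod_filter,
      Finset.prod_const, count_odd, ← pow_mul, Nat.mul_comm]
  rw [hsign]
  -- Step 3 : det F
  set d : ℕ → ℕ → ℕ → R := fun a b k => x a b (k + 1) - x a b (k + 2) with hd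
  set G : Matrix (Fin N × Fin m) (Fin N × Fin m) R :=
    Matrix.of (fun p q : Fin N × Fin m =>
      if q.2.1 ≤ p.2.1 then d (p.1.1 + 1) (q.1.1 + 1) p.2.1 else 0) with hG
  set L : Matrix (Fin N × Fin m) (Fin N × Fin m) R :=
    Matrix.of (fun p q : Fin N × Fin m =>
      (if q = p then (1:R) else 0) - (if q.1 = p.1 ∧ q.2.1 = p.2.1 + 1 then 1 else 0)) with hL
  have hLF : L * F = G := by
    ext p q
    obtain ⟨i, r⟩ := p
    obtain ⟨j, s⟩ := q
    rw [Matrix.mul_apply]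
    have hsummand : ∀ u : Fin N × Fin m, L (i,r) u * F u (j,s) =
        (if u = (i,r) then F u (j,s) else 0) -
        (if u.1 = i ∧ u.2.1 = r.1 + 1 then F u (j,s) else 0) := by
      intro u
      rw [hL]
      show ((if u = (i,r) then (1:R) else 0) - (if u.1 = i ∧ u.2.1 = r.1 + 1 then 1 else 0))
          * F u (j,s) = _
      simp [sub_mul, ite_mul]
    rw [Finset.sum_congr rfl (fun u _ => hsummand u), Finset.sum_sub_distrib,
      Finset.sum_ite_eq' Finset.univ ((i,r) : Fin N × Fin m) (fun u => F u (j,s)),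
      if_pos (Finset.mem_univ _)]
    have h2 : (∑ u : Fin N × Fin m, if u.1 = i ∧ u.2.1 = r.1 + 1 then F u (j,s) else 0)
        = if h : r.1 + 1 < m then F (i, ⟨r.1+1, h⟩) (j,s) else 0 := by
      split_ifs with h
      · rw [Finset.sum_eq_single ((i, ⟨r.1+1, h⟩) : Fin N × Fin m)]
        · simp
        · intro u _ hu
          rw [if_neg]
          rintro ⟨h1, h2⟩
          exact hu (Prod.ext h1 (Fin.ext h2))
        · intro hmem; exact absurd (Finset.mem_univ _) hmem
      · apply Finset.sum_eq_zero
        intro u _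
        rw [if_neg]
        rintro ⟨-, h2⟩
        have := u.2.2
        omega
    rw [h2]
    have hxeq : ∀ a b c c', c = c' → x a b c = x a b c' := fun a b c c' h => by rw [h]
    show x (i.1+1) (j.1+1) (max (r.1+1) (s.1+1)) -
        (if h : r.1 + 1 < m then x (i.1+1) (j.1+1) (max (r.1+1+1) (s.1+1)) else 0)
        = if s.1 ≤ r.1 then x (i.1+1) (j.1+1) (r.1+1) - x (i.1+1) (j.1+1) (r.1+2) else 0
    split_ifs with h hs hs
    · -- r+1 < m, s ≤ r
      rw [hxeq (i.1+1) (j.1+1) (max (r.1+1) (s.1+1)) (r.1+1) (by omega),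
        hxeq (i.1+1) (j.1+1) (max (r.1+1+1) (s.1+1)) (r.1+2) (by omega)]
    · -- r+1 < m, ¬ s ≤ r
      rw [hxeq (i.1+1) (j.1+1) (max (r.1+1) (s.1+1)) (s.1+1) (by omega),
        hxeq (i.1+1) (j.1+1) (max (r.1+1+1) (s.1+1)) (s.1+1) (by omega), sub_self]
    · -- ¬ r+1 < m, s ≤ r
      rw [hxeq (i.1+1) (j.1+1) (max (r.1+1) (s.1+1)) (r.1+1) (by have := s.2; omega),
        hxeq (i.1+1) (j.1+1) (r.1+2) (m+1) (by have := r.2; omega), hx, sub_zero]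
    · -- ¬ r+1 < m, ¬ s ≤ r : impossible
      exact absurd (by have := s.2; have := r.2; omega : s.1 ≤ r.1) hs
  have hLdet : L.det = 1 := by
    have hbt : L.BlockTriangular (fun p : Fin N × Fin m => p.2) := by
      intro p q hqp
      rw [hL]
      show (if q = p then (1:R) else 0) - (if q.1 = p.1 ∧ q.2.1 = p.2.1 + 1 then 1 else 0) = 0
      rw [if_neg, if_neg, sub_zero]
      · rintro ⟨-, h2⟩
        have : q.2.1 < p.2.1 := hqp
        omega
      · rintro rfl
        exact lt_irrefl _ hqp
    rw [hbt.det_fintype]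
    apply Finset.prod_eq_one
    intro k _
    have h1 : L.toSquareBlock (fun p : Fin N × Fin m => p.2) k = 1 := by
      ext p q
      have hp : p.1.2 = k := p.2
      have hq : q.1.2 = k := q.2
      show (if q.1 = p.1 then (1:R) else 0)
          - (if q.1.1 = p.1.1 ∧ q.1.2.1 = p.1.2.1 + 1 then 1 else 0) = (1 : Matrix _ _ R) p q
      have hne : ¬(q.1.1 = p.1.1 ∧ q.1.2.1 = p.1.2.1 + 1) := by
        rintro ⟨-, h2⟩
        rw [hp, hq] at h2
        omega
      rw [if_neg hne, sub_zero, Matrix.one_apply]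
      by_cases h : p = q
      · rw [if_pos (by rw [h]), if_pos h]
      · rw [if_neg (fun hc => h (Subtype.ext hc.symm)), if_neg h]
    rw [h1, Matrix.det_one]
  have hFdet : F.det = G.det := by
    rw [← hLF, Matrix.det_mul, hLdet, one_mul]
  have hGdet : G.det = ∏ k ∈ Finset.range m,
      Matrix.det (Matrix.of fun i j : Fin N =>
        x (i.1 + 1) (j.1 + 1) (k + 1) - x (i.1 + 1) (j.1 + 1) (k + 2)) := by
    rw [← Matrix.det_transpose G]
    have hbt : Gᵀ.BlockTriangular (fun p : Fin N × Fin m => p.2) := by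
      intro p q hqp
      rw [Matrix.transpose_apply, hG]
      show (if p.2.1 ≤ q.2.1 then d (q.1.1+1) (p.1.1+1) q.2.1 else 0) = 0
      rw [if_neg]
      have : q.2.1 < p.2.1 := hqp
      omega
    rw [hbt.det_fintype,
      ← Fin.prod_univ_eq_prod_range (fun k => Matrix.det (Matrix.of fun i j : Fin N =>
        x (i.1 + 1) (j.1 + 1) (k + 1) - x (i.1 + 1) (j.1 + 1) (k + 2))) m]
    apply Finset.prod_congr rfl
    intro k _
    let e : Fin N ≃ {p : Fin N × Fin m // p.2 = k} :=
      { toFun := fun i => ⟨(i, k), rfl⟩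
        invFun := fun p => p.1.1
        left_inv := fun i => rfl
        right_inv := fun p => Subtype.ext (Prod.ext rfl p.2.symm) }
    rw [← Matrix.det_submatrix_equiv_self e]
    have h1 : ((Gᵀ.toSquareBlock (fun p : Fin N × Fin m => p.2) k).submatrix e e)
        = (Matrix.of fun i j : Fin N =>
        x (i.1 + 1) (j.1 + 1) (k.1 + 1) - x (i.1 + 1) (j.1 + 1) (k.1 + 2))ᵀ := by
      ext a b
      show G ((b, k) : Fin N × Fin m) ((a, k) : Fin N × Fin m)
          = x (b.1+1) (a.1+1) (k.1+1) - x (b.1+1) (a.1+1) (k.1+2)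
      rw [hG]
      show (if k.1 ≤ k.1 then d (b.1+1) (a.1+1) k.1 else 0)
          = x (b.1+1) (a.1+1) (k.1+1) - x (b.1+1) (a.1+1) (k.1+2)
      rw [if_pos le_rfl, hd]
    rw [h1, Matrix.det_transpose]
  rw [hFdet, hGdet]
  congr 1
  rw [Units.val_pow_eq_pow_val]
  push_cast
  rfl
end
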